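/- arXiv:1804.02259 — 9 statements merged into one kernel-verified Lean document; each statement's English description precedes it below -/
import Mathlib

section
/- For every finite simple graph G, the independence number α(G) is at least the sum over all vertices u of 1/(d(u)+1), where d(u) is the degree of u. -/
/-!
Greedy argument: pick a vertex `v` of minimum degree, put it into the independent set and delete
its closed neighbourhood. Each of the at most `d(v) + 1` deleted vertices has weight
`1 / (d(u) + 1) ≤ 1 / (d(v) + 1)`, so together they weigh at most `1`, the gain in size; and deleting
vertices only increases the weights of the survivors, so induction on the remaining graph applies.
-/

open Finset

namespace SimpleGraph

variable {V : Type*} (G : SimpleGraph V) [DecidableRel G.Adj]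

lemma one_div_card_filter_adj_add_one_anti {s t : Finset V} (hst : s ⊆ t) (u : V) :
    1 / (#{w ∈ t | G.Adj u w} + 1 : ℝ) ≤ 1 / (#{w ∈ s | G.Adj u w} + 1 : ℝ) := by
  gcongr

variable [DecidableEq V]

lemma sum_insert_filter_adj_le_one {s : Finset V} {v : V} (hv : v ∈ s)
    (hmin : ∀ u ∈ s, #{w ∈ s | G.Adj v w} ≤ #{w ∈ s | G.Adj u w}) :
    ∑ u ∈ insert v {w ∈ s | G.Adj v w}, 1 / (#{w ∈ s | G.Adj u w} + 1 : ℝ) ≤ 1 := by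
  set d := #{w ∈ s | G.Adj v w}
  have hterm : ∀ u ∈ insert v {w ∈ s | G.Adj v w},
      1 / (#{w ∈ s | G.Adj u w} + 1 : ℝ) ≤ 1 / (d + 1 : ℝ) := by
    intro u hu
    gcongr
    exact_mod_cast hmin u (insert_subset hv (filter_subset _ _) hu)
  calc ∑ u ∈ insert v {w ∈ s | G.Adj v w}, 1 / (#{w ∈ s | G.Adj u w} + 1 : ℝ)
      ≤ #(insert v {w ∈ s | G.Adj v w}) • (1 / (d + 1 : ℝ)) := sum_le_card_nsmul _ _ _ hterm
    _ ≤ (d + 1 : ℝ) * (1 / (d + 1 : ℝ)) := by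
      rw [nsmul_eq_mul]
      gcongr
      exact_mod_cast card_insert_le _ _
    _ = 1 := mul_one_div_cancel (Nat.cast_add_one_ne_zero d)

lemma isIndepSet_insert_of_subset_sdiff {s I : Finset V} {v : V} (hI : G.IsIndepSet (I : Set V))
    (hIs : I ⊆ s \ insert v {w ∈ s | G.Adj v w}) : G.IsIndepSet (insert v I : Finset V) := by
  have hnadj : ∀ u ∈ I, ¬ G.Adj v u := fun u hu hadj => by
    obtain ⟨hus, hut⟩ := mem_sdiff.mp (hIs hu)
    exact hut (mem_insert_of_mem (mem_filter.mpr ⟨hus, hadj⟩))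
  rw [coe_insert]
  exact hI.insert fun u hu _ => ⟨hnadj u hu, fun h => hnadj u hu h.symm⟩

theorem exists_isIndepSet_subset_sum_le_card (s : Finset V) :
    ∃ I ⊆ s, G.IsIndepSet (I : Set V) ∧
      ∑ u ∈ s, 1 / (#{w ∈ s | G.Adj u w} + 1 : ℝ) ≤ #I := by
  induction s using strongInduction with
  | H s ih =>
  rcases s.eq_empty_or_nonempty with rfl | hne
  · exact ⟨∅, empty_subset _, by simp⟩
  obtain ⟨v, hvs, hmin⟩ := s.exists_min_image (fun u => #{w ∈ s | G.Adj u w}) hne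
  set t := insert v {w ∈ s | G.Adj v w}
  have hts : t ⊆ s := insert_subset hvs (filter_subset _ _)
  have hvt : v ∈ t := mem_insert_self _ _
  obtain ⟨I, hIs, hI, hsum⟩ := ih (s \ t) (sdiff_ssubset hts ⟨v, hvt⟩)
  have hvI : v ∉ I := fun hv => (mem_sdiff.mp (hIs hv)).2 hvt
  refine ⟨insert v I, insert_subset hvs (hIs.trans sdiff_subset),
    G.isIndepSet_insert_of_subset_sdiff hI hIs, ?_⟩
  calc ∑ u ∈ s, 1 / (#{w ∈ s | G.Adj u w} + 1 : ℝ)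
      = ∑ u ∈ s \ t, 1 / (#{w ∈ s | G.Adj u w} + 1 : ℝ)
        + ∑ u ∈ t, 1 / (#{w ∈ s | G.Adj u w} + 1 : ℝ) := (sum_sdiff hts).symm
    _ ≤ ∑ u ∈ s \ t, 1 / (#{w ∈ s \ t | G.Adj u w} + 1 : ℝ) + 1 := by
      refine add_le_add (sum_le_sum fun u _ => ?_) (G.sum_insert_filter_adj_le_one hvs hmin)
      exact G.one_div_card_filter_adj_add_one_anti sdiff_subset u
    _ ≤ #I + 1 := by gcongr
    _ = #(insert v I) := by rw [card_insert_of_notMem hvI, Nat.cast_succ]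

end SimpleGraph

/-- Caro–Wei bound: every finite simple graph has an independent set (a set of
pairwise non-adjacent vertices) of size at least ∑_u 1/(d(u)+1). -/
theorem caro_wei {V : Type*} [Fintype V] [DecidableEq V]
    (G : SimpleGraph V) [DecidableRel G.Adj] :
    ∃ I : Finset V, (I : Set V).Pairwise (fun u v => ¬ G.Adj u v) ∧
      (∑ u : V, (1 : ℝ) / (G.degree u + 1)) ≤ I.card := by
  obtain ⟨I, -, hI, hsum⟩ := G.exists_isIndepSet_subset_sum_le_card univ
  refine ⟨I, hI, ?_⟩
  simpa only [← G.neighborFinset_eq_filter, G.card_neighborFinset_eq_degree] using hsum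
end

section
/- For every finite simple graph G and fixed non-negative integer d, G contains a d-degenerate induced subgraph on at least ∑_{u∈V(G)} (min{d(u),d}+1)/(d(u)+1) vertices. -/
/-!
Induct on the vertex set `s`, tracking the potential `∑ u ∈ s, w(deg_s u)` with
`w(D) = (min D d + 1) / (D + 1) ≤ 1`. If some vertex has at most `d` neighbours in `s`, it can be
placed last in an ordering of `s \ {v}`: this gains one vertex and the potential drops by at most
`w ≤ 1`, since deleting a vertex only lowers degrees and `w` is antitone. Otherwise every degree
exceeds `d`; delete a vertex `v` of maximum degree `D`. Each of its `D` neighbours `u` has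
`d < deg u ≤ D`, so its weight rises by `(d+1)/(deg u (deg u + 1)) ≥ (d+1)/(D(D+1))`, and together
these compensate for the lost weight `w(D) = (d+1)/(D+1)`.
-/

variable {V : Type*} [Fintype V] [DecidableEq V]

/-- A list of vertices witnesses κ-degeneracy: each vertex has at most κ of it
neighbors among the earlier vertices of the ordering. -/
def DegenList (G : SimpleGraph V) [DecidableRel G.Adj] (κ : V → ℤ) (l : List V) : Prop :=
  l.Nodup ∧ ∀ i : Fin l.length,
    ((((l.take i).toFinset).filter (fun v => G.Adj (l.get i) v)).card : ℤ) ≤ κ (l.get i)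

/-- A set of vertices is κ-degenerate if it admits a suitable linear ordering. -/
def IsDegen (G : SimpleGraph V) [DecidableRel G.Adj] (κ : V → ℤ) (I : Finset V) : Prop :=
  ∃ l : List V, l.toFinset = I ∧ DegenList G κ l

open Finset

section

variable {α : Type*} [DecidableEq α]

section DegenList

variable {G : SimpleGraph α} [DecidableRel G.Adj] {κ : α → ℤ}

lemma DegenList.nil : DegenList G κ [] :=
  ⟨List.nodup_nil, fun i => i.elim0⟩

lemma DegenList.concat {l : List α} {v : α} (hl : DegenList G κ l) (hv : v ∉ l)
    (hdeg : (#(l.toFinset.filter (G.Adj v)) : ℤ) ≤ κ v) : DegenList G κ (l ++ [v]) := by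
  obtain ⟨hnd, hl⟩ := hl
  refine ⟨hnd.append (List.nodup_singleton v) (by simpa using hv), fun i => ?_⟩
  obtain ⟨i, hi⟩ := i
  rw [List.length_append, List.length_singleton] at hi
  rcases Nat.lt_succ_iff_lt_or_eq.1 hi with hlt | rfl
  · simpa [List.getElem_append_left hlt, List.take_append_of_le_length hlt.le] using hl ⟨i, hlt⟩
  · simpa using hdeg

end DegenList

noncomputable def degenWeight (d D : ℕ) : ℝ := (min (D : ℝ) d + 1) / (D + 1)

lemma degenWeight_le_one (d D : ℕ) : degenWeight d D ≤ 1 := by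
  rw [degenWeight, div_le_one (by positivity)]
  linarith [min_le_left (D : ℝ) d]

lemma degenWeight_antitone (d : ℕ) : Antitone (degenWeight d) := by
  intro a b hab
  have hab' : (a : ℝ) ≤ b := by exact_mod_cast hab
  rw [degenWeight, degenWeight, div_le_div_iff₀ (by positivity) (by positivity)]
  rcases le_total (b : ℝ) d with hb | hb
  · rw [min_eq_left hb, min_eq_left (hab'.trans hb), mul_comm]
  · rw [min_eq_right hb]
    rcases le_total (a : ℝ) d with ha | ha
    · rw [min_eq_left ha]; nlinarith
    · rw [min_eq_right ha]; nlinarith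

lemma degenWeight_of_lt {d D : ℕ} (h : d < D) : degenWeight d D = (d + 1) / (D + 1) := by
  rw [degenWeight, min_eq_right (by exact_mod_cast h.le)]

lemma degenWeight_eq_mul_of_lt {d D : ℕ} (h : d < D) :
    degenWeight d D = D * ((d + 1) / (D * (D + 1))) := by
  have hD : (0 : ℝ) < D := by exact_mod_cast (Nat.zero_le d).trans_lt h
  rw [degenWeight_of_lt h]
  field_simp

lemma degenWeight_add_le_degenWeight_pred {d D' D : ℕ} (hd : d < D') (hD : D' ≤ D) :
    degenWeight d D' + (d + 1) / (D * (D + 1)) ≤ degenWeight d (D' - 1) := by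
  have hD'pos : (0 : ℝ) < D' := by exact_mod_cast (Nat.zero_le d).trans_lt hd
  have hDD' : (D' : ℝ) ≤ D := by exact_mod_cast hD
  have hpred : degenWeight d (D' - 1) = (d + 1) / D' := by
    rw [degenWeight, min_eq_right (by exact_mod_cast Nat.le_sub_one_of_lt hd),
      Nat.cast_sub (hd.trans_le' (Nat.zero_le d)), Nat.cast_one, sub_add_cancel]
  have hgain : (d + 1) / (D * (D + 1)) ≤ ((d : ℝ) + 1) / (D' * (D' + 1)) :=
    div_le_div_of_nonneg_left (by positivity) (by positivity)
      (mul_le_mul hDD' (by linarith) (by positivity) (by linarith))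
  have hsplit : ((d : ℝ) + 1) / (D' + 1) + (d + 1) / (D' * (D' + 1)) = (d + 1) / D' := by
    field_simp
  rw [degenWeight_of_lt hd, hpred]
  linarith

variable (G : SimpleGraph α) [DecidableRel G.Adj] (d : ℕ)

noncomputable def degenPotential (s : Finset α) : ℝ :=
  ∑ u ∈ s, degenWeight d #(s.filter (G.Adj u))

lemma degenPotential_le_erase_add_one {s : Finset α} {v : α} (hv : v ∈ s) :
    degenPotential G d s ≤ degenPotential G d (s.erase v) + 1 := by
  have hmono : ∑ u ∈ s.erase v, degenWeight d #(s.filter (G.Adj u))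
      ≤ degenPotential G d (s.erase v) :=
    sum_le_sum fun u _ => degenWeight_antitone d <|
      card_le_card <| filter_subset_filter _ (erase_subset v s)
  rw [degenPotential, ← add_sum_erase _ _ hv]
  linarith [degenWeight_le_one d #(s.filter (G.Adj v))]

lemma degenPotential_le_erase_of_max_degree {s : Finset α} {v : α} (hv : v ∈ s)
    (hdeg : ∀ u ∈ s, d < #(s.filter (G.Adj u)))
    (hmax : ∀ u ∈ s, #(s.filter (G.Adj u)) ≤ #(s.filter (G.Adj v))) :
    degenPotential G d s ≤ degenPotential G d (s.erase v) := by
  set D := #(s.filter (G.Adj v))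
  set c : ℝ := (d + 1) / (D * (D + 1))
  have hterm : ∀ u ∈ s.erase v, degenWeight d #(s.filter (G.Adj u)) + (if G.Adj v u then c else 0)
      ≤ degenWeight d #((s.erase v).filter (G.Adj u)) := by
    intro u hu
    have hus := mem_of_mem_erase hu
    rw [filter_erase]
    split_ifs with hadj
    · rw [card_erase_of_mem (mem_filter.2 ⟨hv, hadj.symm⟩)]
      exact degenWeight_add_le_degenWeight_pred (hdeg u hus) (hmax u hus)
    · rw [add_zero, erase_eq_of_notMem fun h => hadj (mem_filter.1 h).2.symm]
  have hcount : ∑ u ∈ s.erase v, (if G.Adj v u then c else 0) = degenWeight d D := by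
    rw [← sum_filter, filter_erase, erase_eq_of_notMem (by simp), sum_const]
    change D • c = _
    rw [nsmul_eq_mul, degenWeight_eq_mul_of_lt (hdeg v hv)]
  have hsum := sum_le_sum hterm
  rw [sum_add_distrib, hcount] at hsum
  rw [degenPotential, degenPotential, ← add_sum_erase _ _ hv]
  linarith

lemma exists_degenList_degenPotential_le (s : Finset α) :
    ∃ l : List α, l.toFinset ⊆ s ∧ DegenList G (fun _ => (d : ℤ)) l ∧
      degenPotential G d s ≤ l.length := by
  induction s using Finset.strongInduction with
  | H s ih =>
  rcases s.eq_empty_or_nonempty with rfl | hne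
  · exact ⟨[], by simp, .nil, by simp [degenPotential]⟩
  by_cases hlow : ∃ v ∈ s, #(s.filter (G.Adj v)) ≤ d
  · obtain ⟨v, hv, hvd⟩ := hlow
    obtain ⟨l, hls, hl, hpot⟩ := ih _ (erase_ssubset hv)
    have hvl : v ∉ l := fun h => notMem_erase v s (hls (List.mem_toFinset.2 h))
    refine ⟨l ++ [v], ?_, hl.concat hvl ?_, ?_⟩
    · simpa [insert_subset_iff, hv] using hls.trans (erase_subset v s)
    · exact_mod_cast (card_le_card (filter_subset_filter _ (hls.trans (erase_subset v s)))).trans hvd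
    · rw [List.length_append, List.length_singleton, Nat.cast_succ]
      linarith [degenPotential_le_erase_add_one G d hv]
  · simp only [not_exists, not_and, not_le] at hlow
    obtain ⟨v, hv, hmax⟩ := exists_max_image s (fun u => #(s.filter (G.Adj u))) hne
    obtain ⟨l, hls, hl, hpot⟩ := ih _ (erase_ssubset hv)
    exact ⟨l, hls.trans (erase_subset v s), hl,
      (degenPotential_le_erase_of_max_degree G d hv hlow hmax).trans hpot⟩

end

/-- Alon–Kahn–Seymour: G contains a d-degenerate set on at least
∑_u (min{d(u),d}+1)/(d(u)+1) vertices. -/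
theorem alon_kahn_seymour (G : SimpleGraph V) [DecidableRel G.Adj] (d : ℕ) :
    ∃ I : Finset V, IsDegen G (fun _ => (d : ℤ)) I ∧
      (∑ u : V, ((min (G.degree u) d : ℝ) + 1) / (G.degree u + 1)) ≤ I.card := by
  obtain ⟨l, -, hl, hpot⟩ := exists_degenList_degenPotential_le G d univ
  refine ⟨l.toFinset, ⟨l, rfl, hl⟩, ?_⟩
  rw [List.toFinset_card_of_nodup hl.1]
  refine (le_of_eq (sum_congr rfl fun u _ => ?_)).trans hpot
  rw [degenWeight, ← SimpleGraph.neighborFinset_eq_filter, G.card_neighborFinset_eq_degree]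
end

section
/- Let G be a finite simple graph and κ: V(G) → ℤ with 0 ≤ κ(u) ≤ d(u) for every vertex u. Then G has a κ-degenerate set of vertices of size at least ∑_{u∈V(G)} (κ(u)+1)/(d(u)+1). -/
/-!
A derandomization of the random-ordering argument. Thresholds `κ v = -1` are allowed: such a
vertex can no longer be chosen, and its weight `(κ v + 1) / (d v + 1)` is `0`. Put a vertex `u` with `κ u ≥ 0`
first, delete its edges, and lower by one the nonnegative thresholds of its neighbours: an ordering
of the rest for the new thresholds extends by `u`. Each candidate `v` has
`weight v + d v * drop v = 1`, where `drop v` is what its weight loses when `d v` and `κ v` both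
drop by one, so averaging over the candidates gives a `u` whose weight plus the drops at its
candidate neighbours is at most `1`. Induction on the number of candidates finishes the proof.
-/

variable {V : Type*} [Fintype V] [DecidableEq V]

open Finset SimpleGraph

namespace DegenList

variable {G H : SimpleGraph V} [DecidableRel G.Adj] [DecidableRel H.Adj] {κ κ' : V → ℤ}
  {l : List V}

omit [Fintype V] in
theorem nonneg_of_mem (hl : DegenList G κ l) {w : V} (hw : w ∈ l) : 0 ≤ κ w := by
  obtain ⟨i, rfl⟩ := List.mem_iff_get.1 hw
  exact (Int.natCast_nonneg _).trans (hl.2 i)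

omit [Fintype V] in
theorem mono (hl : DegenList G κ l) (hadj : ∀ a ∈ l, ∀ b ∈ l, H.Adj a b → G.Adj a b)
    (hκ : ∀ w ∈ l, κ w ≤ κ' w) : DegenList H κ' l := by
  refine ⟨hl.1, fun i => le_trans ?_ ((hl.2 i).trans (hκ _ (List.get_mem l i)))⟩
  refine Nat.cast_le.2 (card_le_card fun v hv => ?_)
  simp only [mem_filter, List.mem_toFinset] at hv ⊢
  exact ⟨hv.1, hadj _ (List.get_mem l i) _ (List.take_subset _ _ hv.1) hv.2⟩

omit [Fintype V] in
theorem cons (hl : DegenList G κ' l) {u : V} (hu : u ∉ l) (hκu : 0 ≤ κ u)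
    (hκ : ∀ w ∈ l, κ' w + (if G.Adj w u then 1 else 0) ≤ κ w) : DegenList G κ (u :: l) := by
  refine ⟨List.nodup_cons.2 ⟨hu, hl.1⟩, fun i => Fin.cases ?_ (fun j => ?_) i⟩
  · refine le_of_eq_of_le ?_ hκu
    simp only [Fin.val_zero, List.take_zero, List.toFinset_nil, filter_empty, card_empty,
      Nat.cast_zero]
  have hw : l.get j ∈ l := List.get_mem l j
  have hut : u ∉ (l.take j).toFinset := fun h => hu (List.take_subset _ _ (List.mem_toFinset.1 h))
  have hprefix : ((u :: l).take (j.succ : ℕ)).toFinset = insert u (l.take j).toFinset := by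
    rw [Fin.val_succ, List.take_succ_cons, List.toFinset_cons]
  rw [hprefix, List.get_cons_succ', filter_insert]
  refine le_trans ?_ (hκ _ hw)
  have := hl.2 j
  split_ifs with hadj
  · rw [card_insert_of_notMem fun h => hut (mem_filter.1 h).1]
    push_cast
    omega
  · omega

end DegenList

namespace SimpleGraph

variable (G : SimpleGraph V) [DecidableRel G.Adj]

theorem neighborFinset_deleteIncidenceSet_of_ne {u v : V} (hv : v ≠ u) :
    (G.deleteIncidenceSet u).neighborFinset v = (G.neighborFinset v).erase u := by
  ext w
  simp [deleteIncidenceSet_adj, hv, and_comm]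

theorem degree_deleteIncidenceSet_self (u : V) : (G.deleteIncidenceSet u).degree u = 0 := by
  rw [← card_neighborFinset_eq_degree, card_eq_zero]
  ext w
  simp [deleteIncidenceSet_adj]

theorem degree_deleteIncidenceSet_add_one_of_adj {u v : V} (h : G.Adj u v) :
    (G.deleteIncidenceSet u).degree v + 1 = G.degree v := by
  rw [← card_neighborFinset_eq_degree, neighborFinset_deleteIncidenceSet_of_ne G h.ne',
    card_erase_add_one (by simpa using h.symm), card_neighborFinset_eq_degree]

theorem degree_deleteIncidenceSet_of_not_adj {u v : V} (hv : v ≠ u) (h : ¬G.Adj u v) :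
    (G.deleteIncidenceSet u).degree v = G.degree v := by
  rw [← card_neighborFinset_eq_degree, neighborFinset_deleteIncidenceSet_of_ne G hv,
    erase_eq_of_notMem (by simpa [adj_comm] using h), card_neighborFinset_eq_degree]

omit [DecidableEq V] in
theorem sum_sum_filter_adj_le_sum_degree_mul {R : Type*} [CommSemiring R] [PartialOrder R]
    [IsOrderedRing R] (A : Finset V) {f : V → R} (hf : ∀ v ∈ A, 0 ≤ f v) :
    ∑ u ∈ A, ∑ v ∈ A with G.Adj u v, f v ≤ ∑ v ∈ A, G.degree v * f v := by
  calc ∑ u ∈ A, ∑ v ∈ A with G.Adj u v, f v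
      = ∑ v ∈ A, #{u ∈ A | G.Adj u v} * f v := by
        simp_rw [sum_filter]
        rw [sum_comm]
        refine sum_congr rfl fun v _ => ?_
        rw [← sum_filter, sum_const, nsmul_eq_mul]
    _ ≤ ∑ v ∈ A, G.degree v * f v := by
        refine sum_le_sum fun v hv => mul_le_mul_of_nonneg_right ?_ (hf v hv)
        rw [← card_neighborFinset_eq_degree]
        gcongr
        exact fun u hu => by simpa [adj_comm] using (mem_filter.1 hu).2

noncomputable def degenWeight (κ : V → ℤ) (v : V) : ℝ := (κ v + 1) / (G.degree v + 1)

/-- What `degenWeight` loses at `v` when the degree and the threshold of `v` both drop by one. -/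
noncomputable def degenWeightDrop (κ : V → ℤ) (v : V) : ℝ :=
  (G.degree v - κ v) / (G.degree v * (G.degree v + 1))

/-- The thresholds left for the other vertices once `u` is placed first in the ordering.
A threshold of `-1` marks a vertex that can no longer be chosen. -/
def residualThreshold (κ : V → ℤ) (u : V) (v : V) : ℤ :=
  if v = u then -1 else if 0 ≤ κ v ∧ G.Adj u v then κ v - 1 else κ v

variable {G} {κ : V → ℤ} {u : V}

section Averaging

omit [DecidableEq V]

theorem degenWeightDrop_nonneg {v : V} (h : κ v ≤ G.degree v) : 0 ≤ G.degenWeightDrop κ v :=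
  div_nonneg (sub_nonneg.2 (by exact_mod_cast h)) (by positivity)

theorem degenWeight_add_degree_mul_degenWeightDrop {v : V} (h₀ : 0 ≤ κ v)
    (h : κ v ≤ G.degree v) : G.degenWeight κ v + G.degree v * G.degenWeightDrop κ v = 1 := by
  unfold degenWeight degenWeightDrop
  rcases Nat.eq_zero_or_pos (G.degree v) with hd | hd
  · have hκ0 : κ v = 0 := by omega
    simp [hd, hκ0]
  · have : (0 : ℝ) < G.degree v := by exact_mod_cast hd
    field_simp
    ring

theorem exists_degenWeight_add_sum_degenWeightDrop_le_one (hκ : ∀ v, κ v ≤ G.degree v)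
    (hA : ∃ v, 0 ≤ κ v) :
    ∃ u, 0 ≤ κ u ∧
      G.degenWeight κ u + ∑ v with 0 ≤ κ v ∧ G.Adj u v, G.degenWeightDrop κ v ≤ 1 := by
  set A : Finset V := {v | 0 ≤ κ v}
  have hsum : ∑ u ∈ A, (G.degenWeight κ u + ∑ v ∈ A with G.Adj u v, G.degenWeightDrop κ v)
      ≤ ∑ u ∈ A, 1 := by
    calc _ = ∑ u ∈ A, G.degenWeight κ u + ∑ u ∈ A, ∑ v ∈ A with G.Adj u v,
          G.degenWeightDrop κ v := sum_add_distrib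
      _ ≤ ∑ u ∈ A, G.degenWeight κ u + ∑ u ∈ A, G.degree u * G.degenWeightDrop κ u :=
          add_le_add_right (G.sum_sum_filter_adj_le_sum_degree_mul A
            fun v _ => degenWeightDrop_nonneg (hκ v)) _
      _ = ∑ u ∈ A, 1 := by
          rw [← sum_add_distrib]
          exact sum_congr rfl fun u hu =>
            degenWeight_add_degree_mul_degenWeightDrop (mem_filter.1 hu).2 (hκ u)
  obtain ⟨u, hu, hle⟩ := exists_le_of_sum_le (by simpa [A, Finset.Nonempty] using hA) hsum
  refine ⟨u, (mem_filter.1 hu).2, ?_⟩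
  simpa only [A, filter_filter] using hle

end Averaging

section Residual

omit [Fintype V] in
@[simp]
theorem residualThreshold_self : G.residualThreshold κ u u = -1 := by
  simp [residualThreshold]

omit [Fintype V] in
theorem residualThreshold_add_ite_le (v : V) (hv : 0 ≤ G.residualThreshold κ u v) :
    G.residualThreshold κ u v + (if G.Adj v u then 1 else 0) ≤ κ v := by
  unfold residualThreshold at hv ⊢
  split_ifs at hv ⊢ <;> simp_all [adj_comm]

theorem card_nonneg_residualThreshold_lt (hu : 0 ≤ κ u) :
    #{v | 0 ≤ G.residualThreshold κ u v} < #{v | 0 ≤ κ v} := by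
  refine card_lt_card ⟨fun v hv => ?_, fun h => by simpa using h (mem_filter.2 ⟨mem_univ u, hu⟩)⟩
  have := residualThreshold_add_ite_le v (mem_filter.1 hv).2
  simp only [mem_filter, mem_univ, true_and] at hv ⊢
  split_ifs at this <;> omega

theorem neg_one_le_residualThreshold_le_degree (hκ : ∀ v, -1 ≤ κ v ∧ κ v ≤ G.degree v) (v : V) :
    -1 ≤ G.residualThreshold κ u v ∧
      G.residualThreshold κ u v ≤ (G.deleteIncidenceSet u).degree v := by
  unfold residualThreshold
  have := hκ v
  split_ifs with hvu hv
  · subst hvu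
    simp [degree_deleteIncidenceSet_self]
  · have := G.degree_deleteIncidenceSet_add_one_of_adj hv.2
    omega
  · by_cases hadj : G.Adj u v
    · have : ¬0 ≤ κ v := fun h => hv ⟨h, hadj⟩
      omega
    · rwa [G.degree_deleteIncidenceSet_of_not_adj hvu hadj]

theorem degenWeight_eq_degenWeight_residualThreshold_add (hκ : ∀ v, -1 ≤ κ v) (v : V) :
    G.degenWeight κ v = (G.deleteIncidenceSet u).degenWeight (G.residualThreshold κ u) v +
      (if v = u then G.degenWeight κ u else 0) +
      (if 0 ≤ κ v ∧ G.Adj u v then G.degenWeightDrop κ v else 0) := by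
  by_cases hvu : v = u
  · subst hvu
    simp [degenWeight]
  by_cases hadj : G.Adj u v
  · by_cases h₀ : 0 ≤ κ v
    · have hd : (G.degree v : ℝ) = (G.deleteIncidenceSet u).degree v + 1 := by
        exact_mod_cast (G.degree_deleteIncidenceSet_add_one_of_adj hadj).symm
      simp only [degenWeight, degenWeightDrop, residualThreshold, hvu, h₀, hadj, and_self,
        if_true, if_false, hd]
      push_cast
      field_simp
      ring
    · have : κ v = -1 := by linarith [hκ v]
      simp [degenWeight, residualThreshold, hvu, hadj, this]
  · simp [degenWeight, residualThreshold, hvu, hadj,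
      G.degree_deleteIncidenceSet_of_not_adj hvu hadj]

theorem sum_degenWeight_eq_residual_add (hκ : ∀ v, -1 ≤ κ v) :
    ∑ v, G.degenWeight κ v =
      ∑ v, (G.deleteIncidenceSet u).degenWeight (G.residualThreshold κ u) v +
        (G.degenWeight κ u + ∑ v with 0 ≤ κ v ∧ G.Adj u v, G.degenWeightDrop κ v) := by
  rw [sum_congr rfl fun v _ => degenWeight_eq_degenWeight_residualThreshold_add (u := u) hκ v,
    sum_add_distrib, sum_add_distrib, sum_ite_eq', if_pos (mem_univ u), sum_filter, add_assoc]

end Residual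

theorem exists_degenList_sum_degenWeight_le (G : SimpleGraph V) [DecidableRel G.Adj]
    (κ : V → ℤ) (hκ : ∀ v, -1 ≤ κ v ∧ κ v ≤ G.degree v) :
    ∃ l, DegenList G κ l ∧ ∑ v, G.degenWeight κ v ≤ l.length := by
  induction hn : #{v | 0 ≤ κ v} using Nat.strong_induction_on generalizing G κ with
  | _ n ih =>
  by_cases hA : ∃ v, 0 ≤ κ v
  swap
  · refine ⟨[], ⟨List.nodup_nil, fun i => i.elim0⟩, ?_⟩
    rw [List.length_nil, Nat.cast_zero]
    refine (sum_eq_zero fun v _ => ?_).le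
    have : κ v = -1 := by linarith [hκ v, not_le.1 (not_exists.1 hA v)]
    simp [degenWeight, this]
  obtain ⟨u, hu, hle⟩ := exists_degenWeight_add_sum_degenWeightDrop_le_one (fun v => (hκ v).2) hA
  obtain ⟨l, hl, hsum⟩ := ih _ (hn ▸ card_nonneg_residualThreshold_lt hu) (G.deleteIncidenceSet u)
    (G.residualThreshold κ u) (neg_one_le_residualThreshold_le_degree hκ) rfl
  have hul : u ∉ l := fun h => by simpa using hl.nonneg_of_mem h
  refine ⟨u :: l, DegenList.cons ?_ hul hu fun w hw =>
    residualThreshold_add_ite_le w (hl.nonneg_of_mem hw), ?_⟩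
  · refine hl.mono (fun a ha b hb hab => ?_) fun _ _ => le_rfl
    exact deleteIncidenceSet_adj.2 ⟨hab, ne_of_mem_of_not_mem ha hul, ne_of_mem_of_not_mem hb hul⟩
  · rw [sum_degenWeight_eq_residual_add (fun v => (hκ v).1), List.length_cons, Nat.cast_succ]
    linarith

end SimpleGraph

/-- Ackerman–Ben-Zwi–Wolfovitz bound. -/
theorem ackerman_benzwi_wolfovitz (G : SimpleGraph V) [DecidableRel G.Adj]
    (κ : V → ℤ) (hκ : ∀ u, 0 ≤ κ u ∧ κ u ≤ (G.degree u : ℤ)) :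
    ∃ I : Finset V, IsDegen G κ I ∧
      (∑ u : V, ((κ u : ℝ) + 1) / (G.degree u + 1)) ≤ I.card := by
  obtain ⟨l, hl, hsum⟩ :=
    G.exists_degenList_sum_degenWeight_le κ fun v => ⟨by linarith [hκ v], (hκ v).2⟩
  exact ⟨l.toFinset, ⟨l, rfl, hl⟩, by rwa [List.toFinset_card_of_nodup hl.1]⟩
end

section
/- Let G be a finite simple graph, c: V(G) → ℝ_{>0} a weight function, and κ: V(G) → ℤ with 0 ≤ κ(u) ≤ d(u) for every vertex u. Then the maximum c-weight α(G,c,κ) of a κ-degenerate set of vertices of G satisfies α(G,c,κ) ≥ ∑_{u∈V(G)} c(u)(κ(u)+1)/(d(u)+1). -/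
/-!
Order the vertices by a uniformly random bijection σ and keep every vertex u with at most κ(u)
neighbours before it; listed in σ-order, the kept vertices form a κ-degenerate set. The rank of u
within its closed neighbourhood N[u] is uniform on {0, …, d(u)}, because precomposing σ with the
transposition of u and some w ∈ N[u] exchanges the ranks of u and w. So u is kept with probability
(κ(u) + 1)/(d(u) + 1), the expected weight of the kept set is the claimed sum, and some ordering
does at least as well.
-/

variable {V : Type*} [Fintype V] [DecidableEq V]

/-- Maximum c-weight of a κ-degenerate set of vertices. -/
noncomputable def alphaW (G : SimpleGraph V) [DecidableRel G.Adj] (c : V → ℝ) (κ : V → ℤ) : ℝ :=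
  sSup {x : ℝ | ∃ I : Finset V, IsDegen G κ I ∧ x = ∑ u ∈ I, c u}

open Finset

section Rank

variable {α β : Type*} [LinearOrder β]

def rankIn (s : Finset α) (σ : α → β) (v : α) : ℕ := #{x ∈ s | σ x < σ v}

lemma rankIn_insert_self [DecidableEq α] (s : Finset α) (σ : α → β) (v : α) :
    rankIn (insert v s) σ v = rankIn s σ v := by
  simp [rankIn, filter_insert]

lemma rankIn_lt_card {s : Finset α} {v : α} (hv : v ∈ s) (σ : α → β) : rankIn s σ v < #s :=
  card_lt_card <| filter_ssubset.2 ⟨v, hv, lt_irrefl _⟩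

lemma rankIn_lt_rankIn {s : Finset α} {v w : α} (hv : v ∈ s) (σ : α → β) (h : σ v < σ w) :
    rankIn s σ v < rankIn s σ w :=
  card_lt_card <| ssubset_iff_of_subset (monotone_filter_right s fun _ _ hx => hx.trans h) |>.2
    ⟨v, mem_filter.2 ⟨hv, h⟩, fun hv' => lt_irrefl _ (mem_filter.1 hv').2⟩

lemma injOn_rankIn {s : Finset α} {σ : α → β} (hσ : Set.InjOn σ s) :
    Set.InjOn (rankIn s σ) s := by
  intro v hv w hw h
  by_contra hne
  rcases lt_or_gt_of_ne (hσ.ne hv hw hne) with hlt | hlt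
  · exact (rankIn_lt_rankIn hv σ hlt).ne h
  · exact (rankIn_lt_rankIn hw σ hlt).ne' h

lemma image_rankIn {s : Finset α} {σ : α → β} (hσ : Set.InjOn σ s) :
    s.image (rankIn s σ) = range #s :=
  eq_of_subset_of_card_le (image_subset_iff.2 fun _ hv => mem_range.2 (rankIn_lt_card hv σ))
    (by rw [card_range, card_image_of_injOn (injOn_rankIn hσ)])

lemma card_filter_rankIn_le {s : Finset α} {σ : α → β} (hσ : Set.InjOn σ s) {k : ℕ}
    (hk : k < #s) : #{v ∈ s | rankIn s σ v ≤ k} = k + 1 := by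
  rw [← card_image_of_injOn ((injOn_rankIn hσ).mono (filter_subset _ s)),
    ← filter_image (p := (· ≤ k)), image_rankIn hσ, ← card_range (k + 1)]
  congr 1
  ext m
  simp only [mem_filter, mem_range]
  omega

lemma rankIn_comp_perm {s : Finset α} {π : Equiv.Perm α} (hπ : ∀ x, π x ∈ s ↔ x ∈ s)
    (σ : α → β) (v : α) : rankIn s (σ ∘ π) v = rankIn s σ (π v) :=
  card_equiv π fun x => by simp [hπ]

lemma exists_toFinset_eq_pairwise [DecidableEq α] (σ : α ≃ β) (I : Finset α) :
    ∃ l : List α, l.toFinset = I ∧ l.Pairwise (σ · < σ ·) :=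
  ⟨((I.map σ.toEmbedding).sort).map σ.symm, by ext; simp [← Equiv.eq_symm_apply],
    List.pairwise_map.2 <| by simpa using (sortedLT_sort (I.map σ.toEmbedding)).pairwise⟩

variable [Fintype α] [DecidableEq α] [Fintype β]

lemma card_rankIn_le_eq {s : Finset α} {u w : α} (hu : u ∈ s) (hw : w ∈ s) (k : ℕ) :
    #{σ : α ≃ β | rankIn s σ u ≤ k} = #{σ : α ≃ β | rankIn s σ w ≤ k} := by
  have hswap : ∀ x, Equiv.swap u w x ∈ s ↔ x ∈ s := fun x => by
    rw [Equiv.swap_apply_def]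
    split_ifs <;> simp_all
  exact card_nbij' (fun σ => (Equiv.swap u w).trans σ) (fun σ => (Equiv.swap u w).trans σ)
    (fun σ hσ => by simpa [rankIn_comp_perm hswap] using hσ)
    (fun σ hσ => by simpa [rankIn_comp_perm hswap] using hσ)
    (fun σ _ => by ext; simp) (fun σ _ => by ext; simp)

lemma card_mul_card_rankIn_le {s : Finset α} {u : α} (hu : u ∈ s) {k : ℕ} (hk : k < #s) :
    #s * #{σ : α ≃ β | rankIn s σ u ≤ k} = Fintype.card (α ≃ β) * (k + 1) := by
  calc #s * #{σ : α ≃ β | rankIn s σ u ≤ k}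
      = ∑ w ∈ s, #{σ : α ≃ β | rankIn s σ w ≤ k} := by
        rw [sum_congr rfl fun w hw => (card_rankIn_le_eq hu hw k).symm, sum_const, smul_eq_mul]
    _ = ∑ σ : α ≃ β, #{w ∈ s | rankIn s σ w ≤ k} :=
        sum_card_bipartiteAbove_eq_sum_card_bipartiteBelow
          (r := fun w (σ : α ≃ β) => rankIn s σ w ≤ k)
    _ = Fintype.card (α ≃ β) * (k + 1) := by
        rw [sum_congr rfl fun σ _ => card_filter_rankIn_le σ.injective.injOn hk]
        simp

end Rank

section Degeneracy

variable {β : Type*} [LinearOrder β] (G : SimpleGraph V) [DecidableRel G.Adj]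

def degenSetOfOrder (κ : V → ℤ) (σ : V → β) : Finset V :=
  {u | (rankIn (G.neighborFinset u) σ u : ℤ) ≤ κ u}

lemma degenList_of_pairwise {κ : V → ℤ} {σ : V → β} {l : List V}
    (hl : l.Pairwise (σ · < σ ·))
    (hκ : ∀ u ∈ l, (rankIn (G.neighborFinset u) σ u : ℤ) ≤ κ u) : DegenList G κ l := by
  refine ⟨hl.imp fun h e => (e ▸ h).ne rfl,
    fun i => (Int.ofNat_le.2 ?_).trans (hκ _ (l.get_mem i))⟩
  refine card_le_card fun v hv => ?_
  obtain ⟨hvl, hadj⟩ := mem_filter.1 hv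
  obtain ⟨j, hj, rfl⟩ := List.mem_iff_getElem.1 (List.mem_toFinset.1 hvl)
  rw [List.length_take] at hj
  refine mem_filter.2 ⟨(G.mem_neighborFinset _ _).2 hadj, ?_⟩
  rw [List.getElem_take]
  exact List.pairwise_iff_getElem.1 hl _ _ _ _ (lt_min_iff.1 hj).1

lemma isDegen_degenSetOfOrder (κ : V → ℤ) (σ : V ≃ β) : IsDegen G κ (degenSetOfOrder G κ σ) := by
  obtain ⟨l, hl, hσ⟩ := exists_toFinset_eq_pairwise σ (degenSetOfOrder G κ σ)
  refine ⟨l, hl, degenList_of_pairwise G hσ fun u hu => ?_⟩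
  rw [← List.mem_toFinset, hl] at hu
  exact (mem_filter.1 hu).2

variable [Fintype β]

lemma card_mem_degenSetOfOrder_mul (κ : V → ℤ) {u : V} (h0 : 0 ≤ κ u) (hd : κ u ≤ G.degree u) :
    (#{σ : V ≃ β | u ∈ degenSetOfOrder G κ σ} : ℝ) * (G.degree u + 1)
      = Fintype.card (V ≃ β) * (κ u + 1) := by
  obtain ⟨k, hk⟩ := Int.eq_ofNat_of_zero_le h0
  have hcard : #(insert u (G.neighborFinset u)) = G.degree u + 1 := by
    rw [card_insert_of_notMem (by simp), G.card_neighborFinset_eq_degree]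
  have h := card_mul_card_rankIn_le (β := β) (mem_insert_self u (G.neighborFinset u))
    (k := k) (by omega)
  have hmem : ∀ σ : V ≃ β,
      u ∈ degenSetOfOrder G κ σ ↔ rankIn (insert u (G.neighborFinset u)) σ u ≤ k := by
    simp [degenSetOfOrder, rankIn_insert_self, hk]
  rw [hcard] at h
  simp_rw [hmem, hk, mul_comm _ ((G.degree u : ℝ) + 1)]
  exact_mod_cast h

lemma exists_le_sum_degenSetOfOrder [Nonempty (V ≃ β)] (c : V → ℝ) (κ : V → ℤ)
    (hκ : ∀ u, 0 ≤ κ u ∧ κ u ≤ (G.degree u : ℤ)) :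
    ∃ σ : V ≃ β, (∑ u, c u * ((κ u : ℝ) + 1) / (G.degree u + 1))
      ≤ ∑ u ∈ degenSetOfOrder G κ σ, c u := by
  suffices h : ∑ _σ : V ≃ β, ∑ u, c u * ((κ u : ℝ) + 1) / (G.degree u + 1)
      = ∑ σ : V ≃ β, ∑ u ∈ degenSetOfOrder G κ σ, c u by
    obtain ⟨σ, -, hσ⟩ := exists_le_of_sum_le univ_nonempty h.le
    exact ⟨σ, hσ⟩
  calc ∑ _σ : V ≃ β, ∑ u, c u * ((κ u : ℝ) + 1) / (G.degree u + 1)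
      = ∑ u, c u * #{σ : V ≃ β | u ∈ degenSetOfOrder G κ σ} := by
        rw [sum_const, card_univ, nsmul_eq_mul, mul_sum]
        refine sum_congr rfl fun u _ => ?_
        have h := card_mem_degenSetOfOrder_mul G (β := β) κ (hκ u).1 (hκ u).2
        field_simp
        linear_combination -c u * h
    _ = ∑ σ : V ≃ β, ∑ u ∈ degenSetOfOrder G κ σ, c u := by
        rw [sum_comm' (t' := univ) (s' := fun u => {σ : V ≃ β | u ∈ degenSetOfOrder G κ σ})
          (by simp)]
        simp [mul_comm]

end Degeneracy

theorem cgrv_weighted_bound_general (G : SimpleGraph V) [DecidableRel G.Adj]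
    (c : V → ℝ)
    (κ : V → ℤ) (hκ : ∀ u, 0 ≤ κ u ∧ κ u ≤ (G.degree u : ℤ)) :
    (∑ u : V, c u * ((κ u : ℝ) + 1) / (G.degree u + 1)) ≤ alphaW G c κ := by
  have : Nonempty (V ≃ Fin (Fintype.card V)) := ⟨Fintype.equivFin V⟩
  obtain ⟨σ, hσ⟩ := exists_le_sum_degenSetOfOrder (β := Fin (Fintype.card V)) G c κ hκ
  refine hσ.trans (le_csSup ?_ ⟨_, isDegen_degenSetOfOrder G κ σ, rfl⟩)
  refine ((Set.finite_range fun I : Finset V => ∑ u ∈ I, c u).subset ?_).bddAbove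
  rintro _ ⟨I, -, rfl⟩
  exact ⟨I, rfl⟩

/-- Cordasco–Gargano–Rescigno–Vaccaro weighted bound. -/
theorem cgrv_weighted_bound (G : SimpleGraph V) [DecidableRel G.Adj]
    (c : V → ℝ) (hc : ∀ u, 0 < c u)
    (κ : V → ℤ) (hκ : ∀ u, 0 ≤ κ u ∧ κ u ≤ (G.degree u : ℤ)) :
    (∑ u : V, c u * ((κ u : ℝ) + 1) / (G.degree u + 1)) ≤ alphaW G c κ :=
  cgrv_weighted_bound_general G c κ hκ
end

section
/- Let G be a finite simple graph and κ: V(G) → ℤ with 0 ≤ κ(u) ≤ d(u) for all u. If u_1,…,u_n is a uniformly random linear ordering of V(G), then for each vertex u the expected value of max{0, |N(u) ∩ {earlier vertices}| − κ(u)} equals (1/(d(u)+1))·C(d(u)−κ(u)+1, 2). -/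
/-!
Let `T = {u} ∪ N(u)`, so that the number of earlier neighbours of `u` is the rank of `u` in `T`.
Precomposing an ordering with the transposition `(u w)`, for `w ∈ T`, moves the rank of `w` onto `u`,
so all members of `T` have identically distributed ranks; as the ranks of the members of `T` in any
ordering are exactly `0, …, d(u)`, the rank of `u` is uniform on `{0, …, d(u)}`. It remains to evaluate
`∑_{k ≤ d} max(0, k - κ) = C(d - κ + 1, 2)`.
-/

open Finset Function

section Rank

variable {V β M : Type*} [LinearOrder β] [AddCommMonoid M]

theorem sum_card_filter_lt_eq_sum_range (T : Finset V) {g : V → β} (hg : Set.InjOn g T)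
    (f : ℕ → M) :
    ∑ w ∈ T, f #{v ∈ T | g v < g w} = ∑ k ∈ range #T, f k := by
  set rank : V → ℕ := fun w => #{v ∈ T | g v < g w}
  have rank_lt_card : ∀ w ∈ T, rank w < #T := fun w hw =>
    card_lt_card (filter_ssubset.2 ⟨w, hw, lt_irrefl _⟩)
  have rank_strictMono : ∀ w ∈ T, ∀ w', g w < g w' → rank w < rank w' := by
    intro w hw w' hlt
    refine card_lt_card ((ssubset_iff_of_subset fun v hv => ?_).2 ⟨w, ?_, ?_⟩)
    · simp only [mem_filter] at hv ⊢
      exact ⟨hv.1, hv.2.trans hlt⟩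
    · exact mem_filter.2 ⟨hw, hlt⟩
    · simp
  have rank_injOn : Set.InjOn rank T := by
    intro w hw w' hw' h
    rcases lt_trichotomy (g w) (g w') with hlt | heq | hgt
    · exact absurd h (rank_strictMono w hw w' hlt).ne
    · exact hg hw hw' heq
    · exact absurd h (rank_strictMono w' hw' w hgt).ne'
  have image_rank : T.image rank = range #T :=
    eq_of_subset_of_card_le (image_subset_iff.2 fun w hw => mem_range.2 (rank_lt_card w hw))
      (by rw [card_range, card_image_of_injOn rank_injOn])
  rw [← image_rank, sum_image rank_injOn]

variable [DecidableEq V]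

theorem card_filter_swap_trans_lt {T : Finset V} {u w : V} (hu : u ∈ T) (hw : w ∈ T)
    (σ : V ≃ β) :
    #{v ∈ T | ((Equiv.swap u w).trans σ) v < ((Equiv.swap u w).trans σ) u} =
      #{v ∈ T | σ v < σ w} := by
  refine card_equiv (Equiv.swap u w) fun v => ?_
  have : Equiv.swap u w v ∈ T ↔ v ∈ T := by
    rcases eq_or_ne v u with rfl | hvu
    · simp [hu, hw]
    rcases eq_or_ne v w with rfl | hvw
    · simp [hu, hw]
    rw [Equiv.swap_apply_of_ne_of_ne hvu hvw]
  simp [this]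

theorem card_mul_sum_card_filter_lt [Fintype V] [Fintype β] [DecidableEq β] {T : Finset V}
    {u : V} (hu : u ∈ T) (f : ℕ → M) :
    #T • ∑ σ : V ≃ β, f #{v ∈ T | σ v < σ u} =
      Fintype.card (V ≃ β) • ∑ k ∈ range #T, f k := by
  have rank_equidistributed : ∀ w ∈ T,
      ∑ σ : V ≃ β, f #{v ∈ T | σ v < σ u} = ∑ σ : V ≃ β, f #{v ∈ T | σ v < σ w} := by
    intro w hw
    have swap_involutive : Involutive fun σ : V ≃ β => (Equiv.swap u w).trans σ := fun σ => by
      ext v; simp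
    exact (Fintype.sum_bijective _ swap_involutive.bijective _ _
      fun σ => by rw [card_filter_swap_trans_lt hu hw]).symm
  calc #T • ∑ σ : V ≃ β, f #{v ∈ T | σ v < σ u}
      = ∑ w ∈ T, ∑ σ : V ≃ β, f #{v ∈ T | σ v < σ w} := by
        rw [← sum_const, sum_congr rfl rank_equidistributed]
    _ = ∑ σ : V ≃ β, ∑ k ∈ range #T, f k := by
        rw [sum_comm]
        exact sum_congr rfl fun σ _ => sum_card_filter_lt_eq_sum_range T σ.injective.injOn f
    _ = Fintype.card (V ≃ β) • ∑ k ∈ range #T, f k := by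
        rw [sum_const, card_univ]

end Rank

theorem sum_range_max_zero_sub {m : ℤ} (hm : 0 ≤ m) (N : ℕ) :
    ∑ k ∈ range N, max 0 ((k : ℤ) - m) = ((N - m).toNat.choose 2 : ℤ) := by
  induction N with
  | zero => simp [show (-m).toNat = 0 by omega]
  | succ N ih =>
    rw [sum_range_succ, ih]
    rcases le_or_gt m N with hle | hlt
    · rw [show ((N + 1 : ℕ) - m).toNat = (N - m).toNat + 1 by omega, Nat.choose_succ_succ,
        Nat.choose_one_right]
      push_cast
      omega
    · rw [show ((N + 1 : ℕ) - m).toNat = 0 by omega, show ((N : ℤ) - m).toNat = 0 by omega]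
      simp only [Nat.choose_zero_succ, CharP.cast_eq_zero, zero_add, sup_eq_left,
        tsub_le_iff_right]
      omega

/-- For a uniformly random linear ordering of the vertices (modelled as an
equivalence V ≃ Fin n), the expected value of
max{0, #(earlier neighbors of u) − κ(u)} equals (1/(d(u)+1))·C(d(u)−κ(u)+1, 2). -/
theorem expected_increase {V : Type*} [Fintype V] [DecidableEq V]
    (G : SimpleGraph V) [DecidableRel G.Adj]
    (κ : V → ℤ) (hκ : ∀ u, 0 ≤ κ u ∧ κ u ≤ (G.degree u : ℤ)) (u : V) :
    (∑ σ : V ≃ Fin (Fintype.card V),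
        ((max 0 ((((G.neighborFinset u).filter fun v => σ v < σ u).card : ℤ) - κ u) : ℤ) : ℝ))
      / (Nat.factorial (Fintype.card V)) =
    (1 / ((G.degree u : ℝ) + 1)) * ((((G.degree u : ℤ) - κ u + 1).toNat.choose 2 : ℝ)) := by
  set T := insert u (G.neighborFinset u)
  have hu : u ∈ T := mem_insert_self _ _
  have card_T : #T = G.degree u + 1 := by
    rw [card_insert_of_notMem (G.notMem_neighborFinset_self u), G.card_neighborFinset_eq_degree]
  have earlier_neighbors : ∀ σ : V ≃ Fin (Fintype.card V),
      (G.neighborFinset u).filter (fun v => σ v < σ u) = {v ∈ T | σ v < σ u} := fun σ => by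
    rw [filter_insert, if_neg (lt_irrefl _)]
  have rank_uniform := card_mul_sum_card_filter_lt (β := Fin (Fintype.card V)) hu
    fun k => ((max 0 ((k : ℤ) - κ u) : ℤ) : ℝ)
  have sum_ranks : ∑ k ∈ range (G.degree u + 1), ((max 0 ((k : ℤ) - κ u) : ℤ) : ℝ) =
      (((G.degree u + 1 : ℕ) - κ u).toNat.choose 2 : ℝ) := by
    rw [← Int.cast_sum, sum_range_max_zero_sub (hκ u).1, Int.cast_natCast]
  rw [card_T, Fintype.card_equiv (Fintype.equivFin V), sum_ranks, nsmul_eq_mul,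
    nsmul_eq_mul] at rank_uniform
  simp only [earlier_neighbors]
  rw [show ((G.degree u : ℤ) - κ u + 1) = ((G.degree u + 1 : ℕ) - κ u) by push_cast; ring]
  have factorial_ne_zero : ((Fintype.card V).factorial : ℝ) ≠ 0 := by positivity
  field_simp
  push_cast at rank_uniform ⊢
  linarith
end

section
/- Let G be a finite simple graph and κ: V(G) → ℤ with 0 ≤ κ(u) ≤ d(u) for all vertices u. Then β(G,1,κ) ≤ ∑_{u∈V(G)} (d(u)−κ(u))(d(u)−κ(u)+1)/(2(d(u)+1)), where β(G,1,κ) is the minimum total increase ∑_u ι(u) over functions ι: V(G) → ℤ_{≥0} such that V(G) is (κ+ι)-degenerate. -/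
/-!
Order the vertices by a bijection `π : V ≃ Fin n`. Raising the threshold of `u` by
`max 0 (r_π(u) - κ u)`, where `r_π(u)` counts the neighbours of `u` placed before it, makes `π`
a degeneracy ordering. Now `r_π(u)` is the rank of `u` in its closed neighbourhood `N[u]`, and over
all orderings this rank is uniformly distributed on `{0, …, d(u)}`: precomposing with the
transposition of `u` and `v ∈ N[u]` exchanges the ranks of `u` and `v`. Hence the average increase
at `u` is `∑_{r ≤ d} max 0 (r - κ) / (d + 1) = (d - κ)(d - κ + 1) / (2(d + 1))`, and some ordering
does no worse than the average.
-/

variable {V : Type*} [Fintype V] [DecidableEq V]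

/-- Minimum total c-weighted increase ι making the whole vertex set (κ+ι)-degenerate. -/
noncomputable def betaW (G : SimpleGraph V) [DecidableRel G.Adj] (c : V → ℝ) (κ : V → ℤ) : ℝ :=
  sInf {x : ℝ | ∃ ι : V → ℤ, (∀ u, 0 ≤ ι u) ∧
    IsDegen G (fun u => κ u + ι u) Finset.univ ∧ x = ∑ u : V, c u * (ι u : ℝ)}

open Finset

theorem betaW_le_sum (G : SimpleGraph V) [DecidableRel G.Adj] {c : V → ℝ} (hc : ∀ u, 0 ≤ c u)
    (κ ι : V → ℤ) (hι : ∀ u, 0 ≤ ι u) (hdeg : IsDegen G (fun u => κ u + ι u) univ) :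
    betaW G c κ ≤ ∑ u, c u * ι u := by
  refine csInf_le ⟨0, ?_⟩ ⟨ι, hι, hdeg, rfl⟩
  rintro _ ⟨ι', hι', -, rfl⟩
  exact sum_nonneg fun u _ => mul_nonneg (hc u) (by exact_mod_cast hι' u)

theorem isDegen_univ_of_equiv (G : SimpleGraph V) [DecidableRel G.Adj] (κ : V → ℤ) {n : ℕ}
    (π : V ≃ Fin n) (h : ∀ u, (#{w ∈ G.neighborFinset u | π w < π u} : ℤ) ≤ κ u) :
    IsDegen G κ univ := by
  refine ⟨List.ofFn π.symm, ?_, List.nodup_ofFn.mpr π.symm.injective, fun i => ?_⟩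
  · ext v
    simpa using ⟨π v, π.symm_apply_apply v⟩
  · convert h ((List.ofFn π.symm).get i) using 3
    ext v
    simp only [mem_filter, List.mem_toFinset, List.mem_take_iff_getElem, List.getElem_ofFn,
      List.get_ofFn, SimpleGraph.mem_neighborFinset, List.length_ofFn, lt_min_iff,
      and_comm (a := G.Adj _ v)]
    refine and_congr_left fun _ => ⟨?_, fun hv => ⟨π v, ⟨?_, ?_⟩, ?_⟩⟩
    · rintro ⟨j, ⟨hj, -⟩, rfl⟩
      simpa [Fin.lt_def] using hj
    · simpa [Fin.lt_def] using hv
    · exact (π v).2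
    · simp

section Rank

variable {α β M : Type*} [LinearOrder β] [AddCommMonoid M]

theorem sum_card_filter_lt_eq_sum_range_s6 (S : Finset α) {f : α → β} (hf : Set.InjOn f S)
    (g : ℕ → M) : ∑ x ∈ S, g #{y ∈ S | f y < f x} = ∑ i ∈ range #S, g i := by
  have hmono : ∀ x ∈ S, ∀ y ∈ S, f x < f y → #{z ∈ S | f z < f x} < #{z ∈ S | f z < f y} :=
    fun x hx y hy hxy => card_lt_card <| (ssubset_iff_of_subset fun z hz => by
      simp only [mem_filter] at hz ⊢; exact ⟨hz.1, hz.2.trans hxy⟩).2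
      ⟨x, by simp [hx, hxy], by simp⟩
  have hinj : Set.InjOn (fun x => #{y ∈ S | f y < f x}) S := by
    intro x hx y hy hxy
    by_contra hne
    rcases lt_or_gt_of_ne (hf.ne hx hy hne) with hlt | hlt
    · exact (hmono x hx y hy hlt).ne hxy
    · exact (hmono y hy x hx hlt).ne' hxy
  have hlt : ∀ x ∈ S, #{y ∈ S | f y < f x} < #S := fun x hx =>
    card_lt_card (filter_ssubset.2 ⟨x, hx, lt_irrefl _⟩)
  rw [← sum_image hinj]
  congr 1
  refine eq_of_subset_of_card_le (fun i hi => ?_) (by rw [card_image_of_injOn hinj, card_range])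
  obtain ⟨x, hx, rfl⟩ := mem_image.1 hi
  exact mem_range.2 (hlt x hx)

theorem card_filter_comp_lt_eq (S : Finset α) (f : α → β) {σ : Equiv.Perm α}
    (hσ : ∀ x, σ x ∈ S ↔ x ∈ S) (x : α) :
    #{y ∈ S | f (σ y) < f (σ x)} = #{y ∈ S | f y < f (σ x)} :=
  card_nbij' σ σ.symm (fun y hy => by simp_all) (fun y hy => by simp_all [← hσ (σ.symm y)])
    (fun y _ => σ.symm_apply_apply y) (fun y _ => σ.apply_symm_apply y)

variable [DecidableEq α] [Fintype α]

theorem sum_equiv_card_filter_lt_congr {n : ℕ} (S : Finset α) (g : ℕ → M) {u v : α}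
    (hu : u ∈ S) (hv : v ∈ S) :
    ∑ π : α ≃ Fin n, g #{w ∈ S | π w < π u} = ∑ π : α ≃ Fin n, g #{w ∈ S | π w < π v} := by
  have hswap : ∀ x, Equiv.swap u v x ∈ S ↔ x ∈ S := fun x => by
    rcases eq_or_ne x u with rfl | hxu
    · simp [hu, hv]
    rcases eq_or_ne x v with rfl | hxv
    · simp [hu, hv]
    rw [Equiv.swap_apply_of_ne_of_ne hxu hxv]
  rw [← (Equiv.equivCongr (Equiv.swap u v) (Equiv.refl (Fin n))).sum_comp]
  refine sum_congr rfl fun π _ => ?_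
  have := card_filter_comp_lt_eq S π hswap u
  simp_all [Equiv.equivCongr_apply_apply]

theorem card_nsmul_sum_equiv_card_filter_lt {n : ℕ} (S : Finset α) (g : ℕ → M) {u : α}
    (hu : u ∈ S) :
    #S • ∑ π : α ≃ Fin n, g #{w ∈ S | π w < π u}
      = Fintype.card (α ≃ Fin n) • ∑ i ∈ range #S, g i :=
  calc #S • ∑ π : α ≃ Fin n, g #{w ∈ S | π w < π u}
      = ∑ v ∈ S, ∑ π : α ≃ Fin n, g #{w ∈ S | π w < π v} := by
        rw [← sum_const]
        exact sum_congr rfl fun v hv => sum_equiv_card_filter_lt_congr S g hu hv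
    _ = ∑ π : α ≃ Fin n, ∑ v ∈ S, g #{w ∈ S | π w < π v} := sum_comm
    _ = Fintype.card (α ≃ Fin n) • ∑ i ∈ range #S, g i := by
        rw [← card_univ, ← sum_const]
        exact sum_congr rfl fun π _ => sum_card_filter_lt_eq_sum_range_s6 S π.injective.injOn g

end Rank

theorem two_mul_sum_range_max_sub {k m : ℕ} (hkm : k ≤ m) :
    2 * ∑ i ∈ range m, max 0 ((i : ℝ) - k) = (m - k) * (m - k - 1) := by
  induction m, hkm using Nat.le_induction with
  | base => simpa using sum_eq_zero fun i hi => by simpa using (mem_range.1 hi).le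
  | succ m hkm ih =>
    rw [sum_range_succ, mul_add, ih, max_eq_right (sub_nonneg.2 (by exact_mod_cast hkm))]
    push_cast
    ring

def orderIncentive (G : SimpleGraph V) [DecidableRel G.Adj] (κ : V → ℤ) {n : ℕ} (π : V ≃ Fin n)
    (u : V) : ℤ :=
  max 0 (#{w ∈ G.neighborFinset u | π w < π u} - κ u)

theorem sum_equiv_orderIncentive (G : SimpleGraph V) [DecidableRel G.Adj] {κ : V → ℤ} {n : ℕ}
    {u : V} (hκ : 0 ≤ κ u ∧ κ u ≤ G.degree u) :
    ∑ π : V ≃ Fin n, (orderIncentive G κ π u : ℝ) = Fintype.card (V ≃ Fin n) *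
      (((G.degree u : ℝ) - κ u) * ((G.degree u : ℝ) - κ u + 1) / (2 * (G.degree u + 1))) := by
  set S := insert u (G.neighborFinset u)
  have hS : #S = G.degree u + 1 := card_insert_of_notMem (by simp)
  have hrank : ∀ π : V ≃ Fin n,
      #{w ∈ S | π w < π u} = #{w ∈ G.neighborFinset u | π w < π u} := fun π => by
    rw [filter_insert, if_neg (lt_irrefl _)]
  obtain ⟨k, hk⟩ := Int.eq_ofNat_of_zero_le hκ.1
  have hsum := card_nsmul_sum_equiv_card_filter_lt (n := n) S
    (fun i => max 0 ((i : ℝ) - k)) (mem_insert_self u _)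
  have harith := two_mul_sum_range_max_sub (k := k) (m := G.degree u + 1) (by omega)
  simp only [hrank, hS, nsmul_eq_mul] at hsum
  simp only [orderIncentive, hk]
  field_simp
  push_cast at hsum harith ⊢
  linear_combination 2 * hsum + (Fintype.card (V ≃ Fin n) : ℝ) * harith

/-- Cordasco–Gargano–Rescigno–Vaccaro partial-incentives bound (unweighted). -/
theorem partial_incentives_bound (G : SimpleGraph V) [DecidableRel G.Adj]
    (κ : V → ℤ) (hκ : ∀ u, 0 ≤ κ u ∧ κ u ≤ (G.degree u : ℤ)) :
    betaW G (fun _ => (1 : ℝ)) κ ≤ ∑ u : V,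
      (((G.degree u : ℝ) - κ u) * ((G.degree u : ℝ) - κ u + 1)) / (2 * (G.degree u + 1)) := by
  have haverage : ∑ π : V ≃ Fin (Fintype.card V), ∑ u, (orderIncentive G κ π u : ℝ)
      = ∑ _π : V ≃ Fin (Fintype.card V), ∑ u : V,
        ((G.degree u : ℝ) - κ u) * ((G.degree u : ℝ) - κ u + 1) / (2 * (G.degree u + 1)) := by
    rw [sum_comm, sum_const, card_univ, nsmul_eq_mul, mul_sum]
    exact sum_congr rfl fun u _ => sum_equiv_orderIncentive G (hκ u)
  obtain ⟨π, -, hπ⟩ :=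
    exists_le_of_sum_le (univ_nonempty_iff.2 ⟨Fintype.equivFin V⟩) haverage.le
  calc betaW G (fun _ => (1 : ℝ)) κ ≤ ∑ u, 1 * (orderIncentive G κ π u : ℝ) :=
        betaW_le_sum G (fun _ => zero_le_one) κ _ (fun u => le_max_left _ _) <|
          isDegen_univ_of_equiv G _ π fun u => by simp only [orderIncentive]; omega
    _ ≤ _ := by simpa using hπ
end

section
/- Let G be a finite simple graph and κ, τ: V(G) → ℤ with τ(u) + κ(u) = d(u) and 0 ≤ κ(u) ≤ d(u) for all vertices u. Then a set I ⊆ V(G) is κ-degenerate in G if and only if V(G) \ I is a dynamic monopoly in G with threshold function τ. -/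
variable {V : Type*} [Fintype V] [DecidableEq V]

/-- One activation step: add every vertex having at least τ(u) active neighbors. -/
def dynStep (G : SimpleGraph V) [DecidableRel G.Adj] (τ : V → ℤ) (D : Finset V) : Finset V :=
  D ∪ Finset.univ.filter fun u => τ u ≤ ((G.neighborFinset u ∩ D).card : ℤ)

/-- D is a dynamic monopoly (target set) for threshold function τ if iterating the
activation step starting from D eventually activates all vertices. -/
def IsDynMonopoly (G : SimpleGraph V) [DecidableRel G.Adj] (τ : V → ℤ) (D : Finset V) : Prop :=
  ∃ k : ℕ, (dynStep G τ)^[k] D = Finset.univ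

/-! Since `τ u + κ u = d(u)`, a vertex `u` of the inactive set `I` is activated exactly when it
has at most `κ u` neighbours in `I`. Hence a κ-degenerate ordering of `I`, read backwards,
is activated one vertex per round, and conversely the rounds of an activation process, listed
from last to first, give a κ-degenerate ordering. -/

open Finset

section Degeneracy

variable {V : Type*} [DecidableEq V] (G : SimpleGraph V) [DecidableRel G.Adj] {κ : V → ℤ}

lemma isDegen_empty : IsDegen G κ ∅ :=
  ⟨[], rfl, List.nodup_nil, fun i => i.elim0⟩

lemma degenList_concat_iff {l : List V} {u : V} :
    DegenList G κ (l ++ [u]) ↔ DegenList G κ l ∧ u ∉ l ∧ #(l.toFinset.filter (G.Adj u)) ≤ κ u := by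
  simp only [DegenList, Fin.forall_iff, List.length_append, List.length_singleton,
    List.nodup_append, List.nodup_singleton, List.mem_singleton, List.get_eq_getElem]
  constructor
  · rintro ⟨⟨hnd, -, hu⟩, hdeg⟩
    refine ⟨⟨hnd, fun i hi => ?_⟩, fun h => hu u h u rfl rfl, ?_⟩
    · simpa [List.getElem_append_left hi, List.take_append_of_le_length hi.le] using
        hdeg i (by omega)
    · simpa using hdeg l.length (by omega)
  · rintro ⟨⟨hnd, hdeg⟩, hu, hκu⟩
    refine ⟨⟨hnd, trivial, by rintro a ha _ rfl rfl; exact hu ha⟩, fun i hi => ?_⟩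
    rcases Nat.lt_succ_iff_lt_or_eq.1 hi with hi | rfl
    · simpa [List.getElem_append_left hi, List.take_append_of_le_length hi.le] using hdeg i hi
    · simpa using hκu

variable {G}

lemma IsDegen.insert_of_card_filter_le {I : Finset V} {u : V} (hI : IsDegen G κ I) (hu : u ∉ I)
    (hκu : #(I.filter (G.Adj u)) ≤ κ u) : IsDegen G κ (insert u I) := by
  obtain ⟨l, rfl, hl⟩ := hI
  refine ⟨l ++ [u], ?_, (degenList_concat_iff G).2 ⟨hl, by simpa using hu, hκu⟩⟩
  rw [List.toFinset_append, union_comm, insert_eq]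
  rfl

lemma IsDegen.union {J : Finset V} (hJ : IsDegen G κ J) (S : Finset V)
    (hS : ∀ u ∈ S, #((J ∪ S).filter (G.Adj u)) ≤ κ u) : IsDegen G κ (J ∪ S) := by
  induction S using Finset.induction_on with
  | empty => simpa using hJ
  | insert a S ha ih =>
    have hmono (u : V) :
        (#((J ∪ S).filter (G.Adj u)) : ℤ) ≤ #((J ∪ insert a S).filter (G.Adj u)) :=
      Nat.cast_le.2 (card_le_card (monotone_filter_left _ (union_subset_union_right
        (subset_insert a S))))
    have hJS : IsDegen G κ (J ∪ S) :=
      ih fun u hu => (hmono u).trans (hS u (mem_insert_of_mem hu))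
    rw [union_insert] at hS hmono ⊢
    by_cases haJS : a ∈ J ∪ S
    · rwa [insert_eq_of_mem haJS]
    · exact hJS.insert_of_card_filter_le haJS ((hmono a).trans (hS a (mem_insert_self a S)))

end Degeneracy

section Activation

variable (G : SimpleGraph V) [DecidableRel G.Adj] {κ τ : V → ℤ}

lemma dynStep_monotone : Monotone (dynStep G τ) := by
  intro D E h
  refine union_subset_union h (monotone_filter_right _ fun u _ hu => hu.trans ?_)
  exact Nat.cast_le.2 (card_le_card (inter_subset_inter_left h))

lemma SimpleGraph.card_neighborFinset_inter_compl_add_card_filter_adj (u : V) (S : Finset V) :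
    #(G.neighborFinset u ∩ (univ \ S)) + #(S.filter (G.Adj u)) = G.degree u := by
  have h1 : G.neighborFinset u ∩ (univ \ S) = (G.neighborFinset u).filter (· ∉ S) := by
    ext w; simp
  have h2 : S.filter (G.Adj u) = (G.neighborFinset u).filter (fun w => ¬ w ∉ S) := by
    ext w; simp [and_comm]
  rw [h1, h2, card_filter_add_card_filter_not, SimpleGraph.card_neighborFinset_eq_degree]

lemma dynStep_compl_eq (hτκ : ∀ u, τ u + κ u = G.degree u) (I : Finset V) :
    dynStep G τ (univ \ I) = univ \ I.filter (fun u => κ u < #(I.filter (G.Adj u))) := by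
  ext u
  have hsum := G.card_neighborFinset_inter_compl_add_card_filter_adj u I
  have hu := hτκ u
  by_cases huI : u ∈ I
  · simp only [dynStep, mem_union, mem_sdiff, mem_univ, huI, not_true_eq_false, and_false,
      mem_filter, true_and, false_or, not_lt]
    omega
  · simp [dynStep, huI]

end Activation

section Duality

variable {G : SimpleGraph V} [DecidableRel G.Adj] {κ τ : V → ℤ}

lemma DegenList.iterate_dynStep_compl (hτκ : ∀ u, τ u + κ u = G.degree u) {l : List V}
    (hl : DegenList G κ l) : (dynStep G τ)^[l.length] (univ \ l.toFinset) = univ := by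
  induction l using List.reverseRecOn with
  | nil => simp
  | append_singleton l u ih =>
    obtain ⟨hl, -, hκu⟩ := (degenList_concat_iff G).1 hl
    have hstep : univ \ l.toFinset ⊆ dynStep G τ (univ \ (l ++ [u]).toFinset) := by
      rw [dynStep_compl_eq G hτκ]
      refine sdiff_subset_sdiff subset_rfl fun v hv => ?_
      obtain ⟨hvu | hvl, hvκ⟩ := by simpa using hv
      · subst hvu
        rw [filter_insert, if_neg (G.irrefl)] at hvκ
        exact absurd hκu hvκ.not_ge
      · exact List.mem_toFinset.2 hvl
    rw [List.length_append, List.length_singleton, Function.iterate_succ_apply,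
      ← univ_subset_iff]
    calc univ = (dynStep G τ)^[l.length] (univ \ l.toFinset) := (ih hl).symm
      _ ⊆ _ := (dynStep_monotone G).iterate _ hstep

lemma isDegen_of_iterate_dynStep_compl (hτκ : ∀ u, τ u + κ u = G.degree u) (k : ℕ)
    {I : Finset V} (hI : (dynStep G τ)^[k] (univ \ I) = univ) : IsDegen G κ I := by
  induction k generalizing I with
  | zero =>
    obtain rfl : I = ∅ := top_disjoint.1 (by simpa using hI)
    exact isDegen_empty G
  | succ k ih =>
    rw [Function.iterate_succ_apply, dynStep_compl_eq G hτκ] at hI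
    have hJ := (ih hI).union (I \ I.filter (fun u => κ u < #(I.filter (G.Adj u))))
    rw [union_sdiff_of_subset (filter_subset _ _)] at hJ
    exact hJ fun u hu => by
      obtain ⟨huI, hu⟩ := mem_sdiff.1 hu
      simpa [huI] using hu

end Duality

theorem degenerate_iff_complement_dynMonopoly_general (G : SimpleGraph V) [DecidableRel G.Adj]
    (κ τ : V → ℤ) (hτκ : ∀ u, τ u + κ u = (G.degree u : ℤ)) (I : Finset V) :
    IsDegen G κ I ↔ IsDynMonopoly G τ (Finset.univ \ I) := by
  constructor
  · rintro ⟨l, rfl, hl⟩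
    exact ⟨l.length, hl.iterate_dynStep_compl hτκ⟩
  · rintro ⟨k, hk⟩
    exact isDegen_of_iterate_dynStep_compl hτκ k hk

/-- Duality: I is κ-degenerate iff its complement is a dynamic monopoly for τ = d − κ. -/
theorem degenerate_iff_complement_dynMonopoly (G : SimpleGraph V) [DecidableRel G.Adj]
    (κ τ : V → ℤ) (hτκ : ∀ u, τ u + κ u = (G.degree u : ℤ))
    (hκ : ∀ u, 0 ≤ κ u ∧ κ u ≤ (G.degree u : ℤ)) (I : Finset V) :
    IsDegen G κ I ↔ IsDynMonopoly G τ (Finset.univ \ I) :=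
  degenerate_iff_complement_dynMonopoly_general G κ τ hτκ I
end

section
/- Let G be a finite connected graph, c: V(G) → ℝ_{>0}, and κ: V(G) → ℤ with 0 ≤ κ(u) ≤ d(u) for all u. If α(G,c,κ) = ∑_{u∈V(G)} c(u)(κ(u)+1)/(d(u)+1), then the quantity c(u)(d(u)−κ(u)) / (d(u)(d(u)+1)) is the same for every vertex u of G. -/
variable {V : Type*} [Fintype V] [DecidableEq V]

/-!
Order the vertices uniformly at random and keep every vertex `z` with at most `κ z` earlier
neighbours: the kept set is `κ`-degenerate, so its weight is at most `α`. The rank of `z` in its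
closed neighbourhood is uniform on `{0, …, d z}`, so `z` is kept with probability
`(κ z + 1) / (d z + 1)`, and the right-hand side of the hypothesis is the average greedy weight.
Equality therefore forces every ordering to have greedy weight exactly `α`.

For adjacent `u`, `v` and `P` avoiding both, compare the orderings `P, u, v, …` and `P, v, u, …`:
only `u` and `v` can change status, which gives
`c u · [|N u ∩ P| = κ u] = c v · [|N v ∩ P| = κ v]`. Choosing `P` inside the neighbourhoods shows
that adjacent vertices either both have `κ = d`, or have the same neighbourhoods apart from each
other and equal `c`, `κ` and `d`. Either way the quantity agrees on `u` and `v`, and connectivity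
propagates it.
-/

open Finset
open scoped Nat

lemma List.Pairwise.rel_get_of_mem_take {α : Type*} {R : α → α → Prop} {l : List α}
    (h : l.Pairwise R) (i : Fin l.length) {t : α} (ht : t ∈ l.take i) : R t (l.get i) := by
  obtain ⟨j, hj, rfl⟩ := List.getElem_of_mem ht
  rw [List.getElem_take]
  rw [List.length_take] at hj
  exact List.pairwise_iff_getElem.1 h _ _ _ _ (by omega)

lemma Finset.exists_subset_intCast_card_eq {α : Type*} {s : Finset α} {k : ℤ} (h0 : 0 ≤ k)
    (hk : k ≤ #s) : ∃ Q ⊆ s, (#Q : ℤ) = k := by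
  obtain ⟨n, rfl⟩ := Int.eq_ofNat_of_zero_le h0
  obtain ⟨Q, hQ, hcard⟩ := exists_subset_card_eq (s := s) (n := n) (by omega)
  exact ⟨Q, hQ, by rw [hcard]⟩

lemma Finset.image_swap_of_mem {α : Type*} [DecidableEq α] {s : Finset α} {a b : α}
    (ha : a ∈ s) (hb : b ∈ s) : s.image (Equiv.swap a b) = s := by
  refine eq_of_subset_of_card_le (image_subset_iff.2 fun t ht => ?_)
    (card_image_of_injective _ (Equiv.injective _)).ge
  rw [Equiv.swap_apply_def]
  split_ifs <;> assumption

lemma Equiv.swap_apply_mem_iff {α : Type*} [DecidableEq α] {s : Finset α} {a b : α}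
    (ha : a ∉ s) (hb : b ∉ s) (t : α) : Equiv.swap a b t ∈ s ↔ t ∈ s := by
  rw [Equiv.swap_apply_def]
  split_ifs <;> simp_all

lemma exists_equiv_fin_lt_iff {α β : Type*} [Fintype α] [LinearOrder β] (f : α → β)
    (hf : Function.Injective f) :
    ∃ σ : α ≃ Fin (Fintype.card α), ∀ a b, σ a < σ b ↔ f a < f b := by
  let : LinearOrder α := LinearOrder.lift' f hf
  let e := (Fintype.orderIsoFinOfCardEq α rfl).symm
  exact ⟨e.toEquiv, fun a b => e.lt_iff_lt⟩

section OrderRank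

variable {α : Type*} [Fintype α] (σ : α ≃ Fin (Fintype.card α))

def orderRank (s : Finset α) (w : α) : ℕ := #{t ∈ s | σ t < σ w}

variable {σ} {s : Finset α}

lemma orderRank_lt_orderRank {a b : α} (ha : a ∈ s) (hab : σ a < σ b) :
    orderRank σ s a < orderRank σ s b := by
  refine card_lt_card ((ssubset_iff_of_subset fun t ht => ?_).2 ⟨a, ?_, ?_⟩)
  · rw [mem_filter] at ht ⊢
    exact ⟨ht.1, ht.2.trans hab⟩
  · exact mem_filter.2 ⟨ha, hab⟩
  · simp

lemma orderRank_lt_card {w : α} (hw : w ∈ s) : orderRank σ s w < #s :=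
  card_lt_card (filter_ssubset.2 ⟨w, hw, lt_irrefl _⟩)

lemma injOn_orderRank : Set.InjOn (orderRank σ s) s := by
  intro a ha b hb hab
  by_contra hne
  rcases lt_or_gt_of_ne (σ.injective.ne hne) with h | h
  · exact (orderRank_lt_orderRank ha h).ne hab
  · exact (orderRank_lt_orderRank hb h).ne' hab

lemma image_orderRank : s.image (orderRank σ s) = range #s :=
  eq_of_subset_of_card_le (fun m hm => by
      obtain ⟨w, hw, rfl⟩ := mem_image.1 hm
      exact mem_range.2 (orderRank_lt_card hw))
    (by rw [card_range, card_image_of_injOn injOn_orderRank])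

lemma card_filter_orderRank_le {k : ℕ} (hk : k < #s) :
    #{w ∈ s | orderRank σ s w ≤ k} = k + 1 := by
  rw [← card_image_of_injOn ((injOn_orderRank (σ := σ)).mono (filter_subset _ _)),
    ← filter_image (p := (· ≤ k)), image_orderRank, ← card_range (k + 1)]
  congr 1
  ext m
  simp only [mem_filter, mem_range]
  omega

variable [DecidableEq α]

lemma orderRank_insert_self (w : α) : orderRank σ (insert w s) w = orderRank σ s w := by
  simp [orderRank, filter_insert]

lemma orderRank_eq_card_inter {Q : Finset α} {z : α} (h : ∀ t, σ t < σ z ↔ t ∈ Q)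
    (s : Finset α) : orderRank σ s z = #(s ∩ Q) := by
  simp_rw [orderRank, h, filter_mem_eq_inter]

lemma orderRank_trans (e : Equiv.Perm α) (he : s.image e = s) (w : α) :
    orderRank (e.trans σ) s w = orderRank σ s (e w) := by
  conv_rhs => rw [orderRank, ← he, filter_image, card_image_of_injective _ e.injective]
  rfl

-- `σ ↦ (swap u w).trans σ` exchanges the ranks of `u` and `w`, so the rank of `u` is
-- equidistributed over `{0, …, #s - 1}`.
lemma card_orderRank_le_mul {u : α} (hu : u ∈ s) {k : ℕ} (hk : k < #s) :
    #{σ : α ≃ Fin (Fintype.card α) | orderRank σ s u ≤ k} * #s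
      = (k + 1) * (Fintype.card α)! := by
  calc #{σ : α ≃ Fin (Fintype.card α) | orderRank σ s u ≤ k} * #s
      = ∑ w ∈ s, #{σ : α ≃ Fin (Fintype.card α) | orderRank σ s w ≤ k} := by
        rw [mul_comm, ← smul_eq_mul, ← sum_const]
        refine sum_congr rfl fun w hw => card_equiv ((Equiv.swap u w).equivCongr (.refl _)) ?_
        intro σ
        simp only [mem_filter, mem_univ, true_and]
        change _ ↔ orderRank ((Equiv.swap u w).trans σ) s w ≤ k
        rw [orderRank_trans _ (image_swap_of_mem hu hw), Equiv.swap_apply_right]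
    _ = ∑ σ : α ≃ Fin (Fintype.card α), #{w ∈ s | orderRank σ s w ≤ k} := by
        simp only [card_filter]
        exact sum_comm
    _ = (k + 1) * (Fintype.card α)! := by
        simp [card_filter_orderRank_le hk, Fintype.card_equiv (Fintype.equivFin α), mul_comm]

end OrderRank

section Degenerate

variable (G : SimpleGraph V) [DecidableRel G.Adj] (κ : V → ℤ)

lemma isDegen_of_orderRank_le (σ : V ≃ Fin (Fintype.card V)) (I : Finset V)
    (h : ∀ x ∈ I, (orderRank σ (G.neighborFinset x ∩ I) x : ℤ) ≤ κ x) : IsDegen G κ I := by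
  set l := (List.ofFn σ.symm).filter (· ∈ I)
  have hsorted : l.Pairwise (fun a b => σ a < σ b) :=
    (List.pairwise_ofFn.2 fun i j hij => by simpa using hij).filter _
  refine ⟨l, by ext x; simpa [l] using fun _ => ⟨σ x, by simp⟩,
    (List.nodup_ofFn.2 σ.symm.injective).filter _, fun i => ?_⟩
  have hx : l.get i ∈ I := by simpa using (List.mem_filter.1 (List.get_mem l i)).2
  refine le_trans ?_ (h _ hx)
  refine Nat.cast_le.2 (card_le_card fun t ht => ?_)
  obtain ⟨htake, hadj⟩ := mem_filter.1 ht
  have htl := List.mem_of_mem_take (List.mem_toFinset.1 htake)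
  simp only [mem_filter, mem_inter, SimpleGraph.mem_neighborFinset]
  exact ⟨⟨hadj, by simpa using (List.mem_filter.1 htl).2⟩,
    hsorted.rel_get_of_mem_take i (List.mem_toFinset.1 htake)⟩

lemma sum_le_alphaW (c : V → ℝ) {I : Finset V} (hI : IsDegen G κ I) :
    ∑ u ∈ I, c u ≤ alphaW G c κ :=
  le_csSup ((Set.finite_range fun J : Finset V => ∑ u ∈ J, c u).subset
    (by rintro _ ⟨J, -, rfl⟩; exact ⟨J, rfl⟩)).bddAbove ⟨I, hI, rfl⟩

end Degenerate

section Greedy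

variable (G : SimpleGraph V) [DecidableRel G.Adj] (c : V → ℝ) (κ : V → ℤ)

def greedySet (σ : V ≃ Fin (Fintype.card V)) : Finset V :=
  {z | (orderRank σ (G.neighborFinset z) z : ℤ) ≤ κ z}

def greedyWeight (σ : V ≃ Fin (Fintype.card V)) : ℝ := ∑ z ∈ greedySet G κ σ, c z

lemma isDegen_greedySet (σ : V ≃ Fin (Fintype.card V)) : IsDegen G κ (greedySet G κ σ) :=
  isDegen_of_orderRank_le G κ σ _ fun _ hx => le_trans
    (Nat.cast_le.2 (card_le_card (filter_subset_filter _ inter_subset_left))) (mem_filter.1 hx).2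

lemma greedyWeight_le_alphaW (σ : V ≃ Fin (Fintype.card V)) :
    greedyWeight G c κ σ ≤ alphaW G c κ :=
  sum_le_alphaW G κ c (isDegen_greedySet G κ σ)

lemma card_orderRank_neighborFinset_le_mul (z : V) {k : ℕ} (hk : k ≤ G.degree z) :
    #{σ : V ≃ Fin (Fintype.card V) | orderRank σ (G.neighborFinset z) z ≤ k} * (G.degree z + 1)
      = (k + 1) * (Fintype.card V)! := by
  have hcard : #(insert z (G.neighborFinset z)) = G.degree z + 1 := by
    rw [card_insert_of_notMem (by simp), SimpleGraph.card_neighborFinset_eq_degree]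
  have := card_orderRank_le_mul (mem_insert_self z (G.neighborFinset z)) (k := k) (by omega)
  simpa only [orderRank_insert_self, hcard] using this

lemma sum_greedyWeight (hκ : ∀ u, 0 ≤ κ u ∧ κ u ≤ G.degree u) :
    ∑ σ, greedyWeight G c κ σ
      = (Fintype.card V)! * ∑ z, c z * ((κ z : ℝ) + 1) / (G.degree z + 1) := by
  have hcount (z : V) :
      (#{σ : V ≃ Fin (Fintype.card V) | (orderRank σ (G.neighborFinset z) z : ℤ) ≤ κ z} : ℝ)
        = (Fintype.card V)! * ((κ z : ℝ) + 1) / (G.degree z + 1) := by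
    obtain ⟨k, hk⟩ := Int.eq_ofNat_of_zero_le (hκ z).1
    have hkd : k ≤ G.degree z := by have := (hκ z).2; omega
    rw [eq_div_iff (by positivity), hk]
    exact_mod_cast (card_orderRank_neighborFinset_le_mul G z hkd).trans (mul_comm _ _)
  simp only [greedyWeight, greedySet, sum_filter]
  rw [sum_comm, mul_sum]
  refine sum_congr rfl fun z _ => ?_
  rw [← sum_filter, sum_const, nsmul_eq_mul, hcount z]
  ring

lemma greedyWeight_eq_alphaW (hκ : ∀ u, 0 ≤ κ u ∧ κ u ≤ G.degree u)
    (hext : alphaW G c κ = ∑ u : V, c u * ((κ u : ℝ) + 1) / (G.degree u + 1))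
    (σ : V ≃ Fin (Fintype.card V)) : greedyWeight G c κ σ = alphaW G c κ := by
  refine (sum_eq_sum_iff_of_le fun τ _ => greedyWeight_le_alphaW G c κ τ).1 ?_ σ (mem_univ σ)
  rw [sum_greedyWeight G c κ hκ, hext, sum_const, card_univ,
    Fintype.card_equiv (Fintype.equivFin V), nsmul_eq_mul]

end Greedy

section Swap

variable {u v : V} {P : Finset V}

lemma exists_order_prefix (hu : u ∉ P) (hv : v ∉ P) (huv : u ≠ v) :
    ∃ σ : V ≃ Fin (Fintype.card V),
      (∀ t, σ t < σ u ↔ t ∈ P) ∧ (∀ t, σ t < σ v ↔ t ∈ insert u P) := by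
  set τ := Fintype.equivFin V
  set n := Fintype.card V
  -- the position in the order `P, u, v, (the rest)`, each block sorted by `τ`
  let f : V → ℕ := fun t =>
    if t ∈ P then τ t else if t = u then n else if t = v then n + 1 else n + 2 + τ t
  have hf : Function.Injective f := by
    intro a b h
    have := (τ a).isLt
    have := (τ b).isLt
    simp only [f] at h
    split_ifs at h <;> first | omega | (subst_vars; rfl) | exact τ.injective (Fin.ext (by omega))
  obtain ⟨σ, hσ⟩ := exists_equiv_fin_lt_iff f hf
  refine ⟨σ, fun t => ?_, fun t => ?_⟩ <;>
  · have := (τ t).isLt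
    simp only [hσ, f, mem_insert, hu, hv, huv.symm, if_false, if_true]
    split_ifs <;> grind

variable {σ : V ≃ Fin (Fintype.card V)}

lemma swap_trans_prefix (hu : u ∉ P) (hv : v ∉ P)
    (hσu : ∀ t, σ t < σ u ↔ t ∈ P) (hσv : ∀ t, σ t < σ v ↔ t ∈ insert u P) :
    (∀ t, ((Equiv.swap u v).trans σ) t < ((Equiv.swap u v).trans σ) v ↔ t ∈ P) ∧
      (∀ t, ((Equiv.swap u v).trans σ) t < ((Equiv.swap u v).trans σ) u ↔ t ∈ insert v P) := by
  refine ⟨fun t => ?_, fun t => ?_⟩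
  · rw [Equiv.trans_apply, Equiv.trans_apply, Equiv.swap_apply_right, hσu,
      Equiv.swap_apply_mem_iff hu hv]
  · rw [Equiv.trans_apply, Equiv.trans_apply, Equiv.swap_apply_left, hσv, mem_insert,
      mem_insert, Equiv.swap_apply_mem_iff hu hv, Equiv.swap_apply_eq_iff, Equiv.swap_apply_left]

lemma orderRank_swap_trans (hσu : ∀ t, σ t < σ u ↔ t ∈ P)
    (hσv : ∀ t, σ t < σ v ↔ t ∈ insert u P) {z : V} (hzu : z ≠ u) (hzv : z ≠ v) (s : Finset V) :
    orderRank ((Equiv.swap u v).trans σ) s z = orderRank σ s z := by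
  have hzσ : σ u < σ z ↔ σ v < σ z := by
    refine ⟨fun h => ?_, ((hσv u).2 (mem_insert_self u P)).trans⟩
    have hzP : z ∉ P := fun hz => lt_asymm h ((hσu z).2 hz)
    have hzv' : ¬σ z < σ v := by rw [hσv, mem_insert]; tauto
    exact lt_of_le_of_ne (not_lt.1 hzv') (σ.injective.ne hzv).symm
  have hlt (t : V) : σ (Equiv.swap u v t) < σ z ↔ σ t < σ z := by
    rw [Equiv.swap_apply_def]
    split_ifs <;> subst_vars <;> simp [hzσ]
  simp only [orderRank, Equiv.trans_apply, Equiv.swap_apply_of_ne_of_ne hzu hzv, hlt]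

lemma orderRank_prefix (G : SimpleGraph V) [DecidableRel G.Adj] (huv : G.Adj u v) (hu : u ∉ P)
    (hσu : ∀ t, σ t < σ u ↔ t ∈ P) (hσv : ∀ t, σ t < σ v ↔ t ∈ insert u P) :
    orderRank σ (G.neighborFinset u) u = #(G.neighborFinset u ∩ P) ∧
      orderRank σ (G.neighborFinset v) v = #(G.neighborFinset v ∩ P) + 1 := by
  refine ⟨orderRank_eq_card_inter hσu _, ?_⟩
  rw [orderRank_eq_card_inter hσv, inter_insert_of_mem (by simpa using huv.symm),
    card_insert_of_notMem fun h => hu (mem_inter.1 h).2]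

variable (G : SimpleGraph V) [DecidableRel G.Adj] (c : V → ℝ) (κ : V → ℤ)

-- In `P, u, v, …` and `P, v, u, …` every vertex other than `u`, `v` sees the same earlier
-- neighbours, so the equal greedy weights differ only in the terms of `u` and `v`.
lemma ite_card_neighborFinset_inter_eq (hW : ∀ σ τ, greedyWeight G c κ σ = greedyWeight G c κ τ)
    (huv : G.Adj u v) (hu : u ∉ P) (hv : v ∉ P) :
    (if (#(G.neighborFinset u ∩ P) : ℤ) = κ u then c u else 0) =
      if (#(G.neighborFinset v ∩ P) : ℤ) = κ v then c v else 0 := by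
  obtain ⟨σ, hσu, hσv⟩ := exists_order_prefix hu hv huv.ne
  obtain ⟨hσ'v, hσ'u⟩ := swap_trans_prefix hu hv hσu hσv
  obtain ⟨hu₁, hv₁⟩ := orderRank_prefix G huv hu hσu hσv
  obtain ⟨hv₂, hu₂⟩ := orderRank_prefix G huv.symm hv hσ'v hσ'u
  have hdiff := hW σ ((Equiv.swap u v).trans σ)
  rw [← sub_eq_zero, greedyWeight, greedyWeight, greedySet, greedySet, sum_filter, sum_filter,
    ← sum_sub_distrib, Fintype.sum_eq_add u v huv.ne] at hdiff
  · rw [hu₁, hv₁, hu₂, hv₂] at hdiff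
    push_cast at hdiff
    split_ifs at hdiff ⊢ <;> first | omega | linarith
  · rintro z ⟨hzu, hzv⟩
    rw [orderRank_swap_trans hσu hσv hzu hzv, sub_self]

end Swap

section Extremal

variable (G : SimpleGraph V) [DecidableRel G.Adj] {c : V → ℝ} {κ : V → ℤ} {u v : V}

lemma card_neighborFinset_erase_add_one (huv : G.Adj u v) :
    #((G.neighborFinset u).erase v) + 1 = G.degree u := by
  rw [card_erase_add_one (by simpa using huv), G.card_neighborFinset_eq_degree]

lemma card_neighborFinset_inter_eq_iff (hc : ∀ u, 0 < c u)
    (hW : ∀ σ τ, greedyWeight G c κ σ = greedyWeight G c κ τ)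
    (huv : G.Adj u v) {P : Finset V} (hu : u ∉ P) (hv : v ∉ P) :
    ((#(G.neighborFinset u ∩ P) : ℤ) = κ u ↔ (#(G.neighborFinset v ∩ P) : ℤ) = κ v) ∧
      ((#(G.neighborFinset u ∩ P) : ℤ) = κ u → c u = c v) := by
  have h := ite_card_neighborFinset_inter_eq G c κ hW huv hu hv
  have := hc u
  have := hc v
  split_ifs at h <;> simp_all

lemma exists_subset_neighborFinset_erase (huv : G.Adj u v) (h0 : 0 ≤ κ u)
    (hu : κ u < G.degree u) :
    ∃ Q ⊆ (G.neighborFinset u).erase v, (#Q : ℤ) = κ u ∧ u ∉ Q ∧ v ∉ Q := by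
  have hlen := card_neighborFinset_erase_add_one G huv
  obtain ⟨Q, hQ, hcard⟩ :=
    exists_subset_intCast_card_eq (s := (G.neighborFinset u).erase v) h0 (by omega)
  exact ⟨Q, hQ, hcard, fun h => by simpa using mem_of_mem_erase (hQ h),
    fun h => by simpa using hQ h⟩

lemma eq_degree_of_adj_of_eq_degree (hc : ∀ u, 0 < c u)
    (hκ : ∀ u, 0 ≤ κ u ∧ κ u ≤ G.degree u)
    (hW : ∀ σ τ, greedyWeight G c κ σ = greedyWeight G c κ τ) (huv : G.Adj u v)
    (hu : κ u = G.degree u) : κ v = G.degree v := by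
  by_contra hv
  obtain ⟨Q, hQ, hcard, hvQ, huQ⟩ :=
    exists_subset_neighborFinset_erase G huv.symm (hκ v).1 (lt_of_le_of_ne (hκ v).2 hv)
  have hQv : G.neighborFinset v ∩ Q = Q := inter_eq_right.2 (hQ.trans (erase_subset _ _))
  have hau := (card_neighborFinset_inter_eq_iff G hc hW huv huQ hvQ).1.2 (by rw [hQv, hcard])
  have hsub : G.neighborFinset u ∩ Q ⊆ (G.neighborFinset u).erase v :=
    fun t ht => mem_erase.2 ⟨fun h => hvQ (h ▸ (mem_inter.1 ht).2), (mem_inter.1 ht).1⟩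
  have := card_le_card hsub
  have := card_neighborFinset_erase_add_one G huv
  omega

lemma neighborFinset_erase_subset (hc : ∀ u, 0 < c u) (h0 : 0 ≤ κ u)
    (hW : ∀ σ τ, greedyWeight G c κ σ = greedyWeight G c κ τ) (huv : G.Adj u v)
    (hu : κ u < G.degree u) : (G.neighborFinset u).erase v ⊆ (G.neighborFinset v).erase u := by
  intro x hx
  obtain ⟨hxv, hxu⟩ := mem_erase.1 hx
  have hxu' : x ≠ u := (G.ne_of_adj ((G.mem_neighborFinset u x).1 hxu)).symm
  refine mem_erase.2 ⟨hxu', ?_⟩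
  by_contra hxN
  obtain ⟨Q, hQ, hcard, huQ, hvQ⟩ := exists_subset_neighborFinset_erase G huv h0 hu
  have hQu : ∀ Q' ⊆ (G.neighborFinset u).erase v, G.neighborFinset u ∩ Q' = Q' :=
    fun Q' hQ' => inter_eq_right.2 (hQ'.trans (erase_subset _ _))
  have hbv := (card_neighborFinset_inter_eq_iff G hc hW huv huQ hvQ).1.1 (by rw [hQu Q hQ, hcard])
  -- toggling the non-neighbour `x` of `v` changes `#(N u ∩ Q)` but not `#(N v ∩ Q)`
  have htoggle : ∀ Q' ⊆ (G.neighborFinset u).erase v,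
      G.neighborFinset v ∩ Q' = G.neighborFinset v ∩ Q → (#Q' : ℤ) = κ u := by
    intro Q' hQ' hQ'v
    have huQ' : u ∉ Q' := fun h => by simpa using mem_of_mem_erase (hQ' h)
    have hvQ' : v ∉ Q' := fun h => by simpa using hQ' h
    rw [← hQu Q' hQ']
    exact (card_neighborFinset_inter_eq_iff G hc hW huv huQ' hvQ').1.2 (by rwa [hQ'v])
  by_cases hxQ : x ∈ Q
  · have := htoggle (Q.erase x) ((erase_subset _ _).trans hQ)
      (by rw [inter_erase, erase_eq_of_notMem fun h => hxN (mem_inter.1 h).1])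
    have := card_erase_add_one hxQ
    omega
  · have := htoggle (insert x Q) (insert_subset hx hQ) (inter_insert_of_notMem hxN)
    rw [card_insert_of_notMem hxQ] at this
    omega

lemma saturated_or_twins_of_adj (hc : ∀ u, 0 < c u) (hκ : ∀ u, 0 ≤ κ u ∧ κ u ≤ G.degree u)
    (hW : ∀ σ τ, greedyWeight G c κ σ = greedyWeight G c κ τ) (huv : G.Adj u v) :
    (κ u = G.degree u ∧ κ v = G.degree v) ∨
      (c u = c v ∧ κ u = κ v ∧ G.degree u = G.degree v) := by
  rcases (hκ u).2.lt_or_eq with hu | hu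
  · rcases (hκ v).2.lt_or_eq with hv | hv
    · have hN : (G.neighborFinset u).erase v = (G.neighborFinset v).erase u :=
        (neighborFinset_erase_subset G hc (hκ u).1 hW huv hu).antisymm
          (neighborFinset_erase_subset G hc (hκ v).1 hW huv.symm hv)
      have hdeg : G.degree u = G.degree v := by
        rw [← card_neighborFinset_erase_add_one G huv, hN,
          card_neighborFinset_erase_add_one G huv.symm]
      obtain ⟨Q, hQ, hcard, huQ, hvQ⟩ := exists_subset_neighborFinset_erase G huv (hκ u).1 hu
      have hQu : G.neighborFinset u ∩ Q = Q := inter_eq_right.2 (hQ.trans (erase_subset _ _))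
      have hQv : G.neighborFinset v ∩ Q = Q :=
        inter_eq_right.2 ((hN ▸ hQ).trans (erase_subset _ _))
      have hrel := card_neighborFinset_inter_eq_iff G hc hW huv huQ hvQ
      rw [hQu, hQv] at hrel
      exact Or.inr ⟨hrel.2 hcard, hcard.symm.trans (hrel.1.1 hcard), hdeg⟩
    · exact absurd (eq_degree_of_adj_of_eq_degree G hc hκ hW huv.symm hv) hu.ne
  · exact Or.inl ⟨hu, eq_degree_of_adj_of_eq_degree G hc hκ hW huv hu⟩

end Extremal

/-- In a connected extremal graph for the weighted degenerate-set bound, the quantity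
c(u)(d(u)−κ(u))/(d(u)(d(u)+1)) is the same for every vertex. -/
theorem extremal_constant_alpha (G : SimpleGraph V) [DecidableRel G.Adj] (hG : G.Connected)
    (c : V → ℝ) (hc : ∀ u, 0 < c u)
    (κ : V → ℤ) (hκ : ∀ u, 0 ≤ κ u ∧ κ u ≤ (G.degree u : ℤ))
    (hext : alphaW G c κ = ∑ u : V, c u * ((κ u : ℝ) + 1) / (G.degree u + 1)) :
    ∀ u v : V,
      c u * ((G.degree u : ℝ) - κ u) / ((G.degree u : ℝ) * ((G.degree u : ℝ) + 1)) =
      c v * ((G.degree v : ℝ) - κ v) / ((G.degree v : ℝ) * ((G.degree v : ℝ) + 1)) := by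
  have hW (σ τ : V ≃ Fin (Fintype.card V)) : greedyWeight G c κ σ = greedyWeight G c κ τ := by
    rw [greedyWeight_eq_alphaW G c κ hκ hext, greedyWeight_eq_alphaW G c κ hκ hext]
  intro u v
  obtain ⟨p⟩ := hG.preconnected u v
  induction p with
  | nil => rfl
  | cons huv _ ih =>
    refine Eq.trans ?_ ih
    rcases saturated_or_twins_of_adj G hc hκ hW huv with ⟨hu, hv⟩ | ⟨hcuv, hκuv, hduv⟩
    · simp [hu, hv]
    · rw [hcuv, hκuv, hduv]
end

section
/- Let G be a finite connected graph with n vertices, c: V(G) → ℝ_{>0}, and κ: V(G) → ℤ with 0 ≤ κ(u) ≤ d(u) for every vertex u. Then β(G,c,κ) = ∑_{u∈V(G)} c(u)(d(u)−κ(u))(d(u)−κ(u)+1)/(2(d(u)+1)) if and only if either (i) κ(u) = d(u) for every vertex u, or (ii) c is constant and κ(u) = 0 for every vertex u, or (iii) G is a complete graph, c and κ are constant with 0 < κ < n−1. -/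
variable {V : Type*} [Fintype V] [DecidableEq V]

/-!
`betaW G c κ` is the minimum, over all orderings `σ` of the vertices, of the cost
`∑ u, c u * max 0 (b_σ(u) - κ u)`, where `b_σ(u)` is the number of neighbours of `u` placed
before `u`. For a uniformly random ordering `b_σ(u)` is uniform on `{0, …, deg u}`, so the
right-hand side is the average cost over all orderings, and `betaW` attains it iff every ordering
has the same cost.

If an ordering lists a set `A` first and then two adjacent vertices `u, v`, exchanging `u` and `v`
changes the cost by `c u * [κ u ≤ |N(u) ∩ A|] - c v * [κ v ≤ |N(v) ∩ A|]`. Taking `A = ∅`, `A = V \ {u, v}` and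
`A ⊆ N(v)` of size `κ v`, connectivity propagates these constraints to the three configurations
of the statement; conversely, in each of them the cost visibly does not depend on the
ordering.
-/

open Finset

theorem Finset.card_nsmul_inf'_eq_sum_iff {ι M : Type*} [AddCommMonoid M] [LinearOrder M]
    [IsOrderedCancelAddMonoid M] {s : Finset ι} (hs : s.Nonempty) (f : ι → M) :
    #s • s.inf' hs f = ∑ i ∈ s, f i ↔ ∀ i ∈ s, ∀ j ∈ s, f i = f j := by
  rw [← sum_const, sum_eq_sum_iff_of_le fun i hi => inf'_le f hi]
  obtain ⟨i₀, hi₀, h₀⟩ := exists_mem_eq_inf' hs f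
  exact ⟨fun h i hi j hj => (h i hi).symm.trans (h j hj),
    fun h i hi => h₀.trans (h i₀ hi₀ i hi)⟩

section Orderings

variable {ι α : Type*} [LinearOrder α]

theorem exists_equiv_fin_lt_iff_s13 [Fintype ι] (p : ι → α) (hp : Function.Injective p) :
    ∃ σ : ι ≃ Fin (Fintype.card ι), ∀ x y, σ x < σ y ↔ p x < p y := by
  let _ := LinearOrder.lift' p hp
  exact ⟨(Fintype.orderIsoFinOfCardEq ι rfl).symm.toEquiv, fun x y =>
    (Fintype.orderIsoFinOfCardEq ι rfl).symm.lt_iff_lt⟩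

theorem lt_iff_lt_of_consecutive {σ : ι ≃ α} {u v : ι} (hσ : ∀ x, σ x < σ v ↔ σ x ≤ σ u)
    {x : ι} (hxu : x ≠ u) : σ x < σ v ↔ σ x < σ u := by
  rw [hσ, le_iff_lt_or_eq, σ.injective.eq_iff, or_iff_left hxu]

theorem Finset.sum_comp_card_filter_lt {M : Type*} [AddCommMonoid M] {p : ι → α}
    (hp : Function.Injective p) (t : Finset ι) (f : ℕ → M) :
    ∑ x ∈ t, f #{y ∈ t | p y < p x} = ∑ j ∈ range #t, f j := by
  have hlt {x x'} (hx : x ∈ t) (h : p x < p x') :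
      #{y ∈ t | p y < p x} < #{y ∈ t | p y < p x'} := by
    refine card_lt_card ((ssubset_iff_of_subset fun y hy => ?_).2 ⟨x, ?_, ?_⟩)
    · simp only [mem_filter] at hy ⊢
      exact ⟨hy.1, hy.2.trans h⟩
    · simp [hx, h]
    · simp
  have hinj : Set.InjOn (fun x => #{y ∈ t | p y < p x}) t := by
    intro x hx x' hx' h
    by_contra hne
    rcases (hp.ne hne).lt_or_gt with hxx' | hxx'
    · exact (hlt hx hxx').ne h
    · exact (hlt hx' hxx').ne h.symm
  have hrange : t.image (fun x => #{y ∈ t | p y < p x}) = range #t := by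
    refine eq_of_subset_of_card_le (fun j hj => ?_) (by rw [card_range, card_image_of_injOn hinj])
    obtain ⟨x, hx, rfl⟩ := mem_image.1 hj
    exact mem_range.2 (card_lt_card ⟨filter_subset _ _, fun hsub => by simpa using hsub hx⟩)
  rw [← hrange, sum_image hinj]

variable [DecidableEq ι]

theorem card_filter_swap_lt {s : Finset ι} {u x : ι} (hu : u ∉ s) (hx : x ∈ insert u s)
    (p : ι → α) :
    #{v ∈ s | p (Equiv.swap u x v) < p (Equiv.swap u x u)} = #{y ∈ insert u s | p y < p x} := by
  refine card_nbij' (Equiv.swap u x) (Equiv.swap u x) ?_ ?_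
    (fun v _ => Equiv.swap_apply_self _ _ _) (fun v _ => Equiv.swap_apply_self _ _ _)
  · intro v hv
    simp only [coe_filter, Set.mem_ofPred_eq, Equiv.swap_apply_left, mem_insert] at hv ⊢
    refine ⟨?_, hv.2⟩
    rcases eq_or_ne v x with rfl | hvx
    · simp
    · rw [Equiv.swap_apply_of_ne_of_ne (by rintro rfl; exact hu hv.1) hvx]
      exact Or.inr hv.1
  · intro y hy
    simp only [coe_filter, Set.mem_ofPred_eq, Equiv.swap_apply_left, mem_insert] at hy ⊢
    have hyx : y ≠ x := by rintro rfl; exact lt_irrefl _ hy.2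
    refine ⟨?_, by rw [Equiv.swap_apply_self]; exact hy.2⟩
    rcases hy.1 with rfl | hys
    · rw [Equiv.swap_apply_left]
      exact (mem_insert.1 hx).resolve_left hyx.symm
    · rwa [Equiv.swap_apply_of_ne_of_ne (by rintro rfl; exact hu hys) hyx]

/-- Composing `σ` with `swap u x` moves `u` to the place of `x`; as `x` runs over `insert u s`,
the rank of `u` in `insert u s` takes every value in `range (#s + 1)` exactly once. -/
theorem card_nsmul_sum_comp_card_filter_lt [Fintype ι] [Fintype α] {M : Type*}
    [AddCommMonoid M] {s : Finset ι} {u : ι} (hu : u ∉ s) (f : ℕ → M) :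
    (#s + 1) • ∑ σ : ι ≃ α, f #{v ∈ s | σ v < σ u}
      = Fintype.card (ι ≃ α) • ∑ j ∈ range (#s + 1), f j := by
  have hswap (x : ι) : Function.Involutive fun σ : ι ≃ α => (Equiv.swap u x).trans σ :=
    fun σ => by ext; simp
  calc (#s + 1) • ∑ σ : ι ≃ α, f #{v ∈ s | σ v < σ u}
      = ∑ x ∈ insert u s, ∑ σ : ι ≃ α, f #{v ∈ s | σ v < σ u} := by
        rw [sum_const, card_insert_of_notMem hu]
    _ = ∑ x ∈ insert u s, ∑ σ : ι ≃ α,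
          f #{v ∈ s | σ (Equiv.swap u x v) < σ (Equiv.swap u x u)} :=
        sum_congr rfl fun x _ => Fintype.sum_bijective _ (hswap x).bijective _ _ fun σ => by
          simp
    _ = ∑ σ : ι ≃ α, ∑ x ∈ insert u s, f #{y ∈ insert u s | σ y < σ x} := by
        rw [sum_comm]
        exact sum_congr rfl fun σ _ => sum_congr rfl fun x hx => by
          rw [card_filter_swap_lt hu hx]
    _ = Fintype.card (ι ≃ α) • ∑ j ∈ range (#s + 1), f j := by
        rw [← card_insert_of_notMem hu, ← card_univ, ← sum_const]
        exact sum_congr rfl fun σ _ => sum_comp_card_filter_lt σ.injective _ f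

theorem exists_equiv_fin_consecutive [Fintype ι] {A : Finset ι} {u v : ι} (hu : u ∉ A)
    (hv : v ∉ A) (huv : u ≠ v) : ∃ σ : ι ≃ Fin (Fintype.card ι),
      (∀ x, σ x < σ u ↔ x ∈ A) ∧ ∀ x, σ x < σ v ↔ σ x ≤ σ u := by
  let r : ι → ℕ := fun x => if x ∈ A then 0 else if x = u then 1 else if x = v then 2 else 3
  obtain ⟨σ, hσ⟩ := exists_equiv_fin_lt_iff_s13 (fun x => toLex (r x, Fintype.equivFin ι x))
    fun x y h => (Fintype.equivFin ι).injective (Prod.ext_iff.1 (toLex.injective h)).2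
  have hσu (x : ι) : σ x < σ u ↔ x ∈ A := by
    rw [hσ, Prod.Lex.toLex_lt_toLex]
    by_cases hxA : x ∈ A <;> by_cases hxu : x = u <;> by_cases hxv : x = v <;> simp_all [r]
  refine ⟨σ, hσu, fun x => ?_⟩
  rw [le_iff_lt_or_eq, σ.injective.eq_iff, hσu, hσ, Prod.Lex.toLex_lt_toLex]
  by_cases hxA : x ∈ A <;> by_cases hxu : x = u <;> by_cases hxv : x = v <;>
    simp_all [r, Ne.symm huv]

end Orderings

theorem sum_range_max_sub_mul_two (k m : ℕ) :
    (∑ j ∈ range (k + m + 1), max 0 ((j : ℤ) - k)) * 2 = m * (m + 1) := by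
  induction m with
  | zero =>
    rw [sum_eq_zero fun j hj => max_eq_left (by simp at hj; omega)]
    simp
  | succ m ih =>
    rw [← add_assoc, sum_range_succ, add_mul, ih, max_eq_right (by omega)]
    push_cast
    ring

theorem SimpleGraph.Preconnected.apply_eq_of_forall_adj {V β : Type*} {G : SimpleGraph V}
    (hG : G.Preconnected) (f : V → β) (h : ∀ u v, G.Adj u v → f u = f v) (u v : V) :
    f u = f v := by
  induction (G.reachable_iff_reflTransGen u v).1 (hG u v) with
  | refl => rfl
  | tail _ hbc ih => exact ih.trans (h _ _ hbc)

theorem SimpleGraph.Preconnected.iff_of_forall_adj {V : Type*} {G : SimpleGraph V}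
    (hG : G.Preconnected) (P : V → Prop) (h : ∀ u v, G.Adj u v → (P u ↔ P v)) (u v : V) :
    P u ↔ P v :=
  (hG.apply_eq_of_forall_adj P (fun x y hxy => propext (h x y hxy)) u v).to_iff

theorem SimpleGraph.Preconnected.adj_of_ne {V : Type*} {G : SimpleGraph V}
    (hG : G.Preconnected) (h : ∀ u v x, G.Adj u v → G.Adj v x → u ≠ x → G.Adj u x)
    {u v : V} (huv : u ≠ v) : G.Adj u v := by
  suffices v = u ∨ G.Adj u v from this.resolve_left huv.symm
  clear huv
  induction (G.reachable_iff_reflTransGen u v).1 (hG u v) with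
  | refl => exact Or.inl rfl
  | @tail x y _ hxy ih =>
    rcases ih with rfl | hux
    · exact Or.inr hxy
    · exact (eq_or_ne y u).imp_right (h u x y hux hxy ∘ Ne.symm)

namespace SimpleGraph

variable (G : SimpleGraph V) [DecidableRel G.Adj] {α : Type*} [LinearOrder α]

def backDegree (p : V → α) (u : V) : ℕ := #{v ∈ G.neighborFinset u | p v < p u}

def incentive (κ : V → ℤ) (p : V → α) (u : V) : ℤ := max 0 ((G.backDegree p u : ℤ) - κ u)

noncomputable def orderingCost (c : V → ℝ) (κ : V → ℤ) (p : V → α) : ℝ :=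
  ∑ u, c u * (G.incentive κ p u : ℝ)

def HasConstantOrderingCost (c : V → ℝ) (κ : V → ℤ) : Prop :=
  ∀ σ τ : V ≃ Fin (Fintype.card V), G.orderingCost c κ σ = G.orderingCost c κ τ

def IsIncentiveExtremal (c : V → ℝ) (κ : V → ℤ) : Prop :=
  (∀ u : V, κ u = (G.degree u : ℤ)) ∨
    ((∃ c₀ : ℝ, ∀ u : V, c u = c₀) ∧ (∀ u : V, κ u = 0)) ∨
    ((∀ u v : V, u ≠ v → G.Adj u v) ∧ (∃ c₀ : ℝ, ∀ u : V, c u = c₀) ∧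
      (∃ κ₀ : ℤ, (∀ u : V, κ u = κ₀) ∧ 0 < κ₀ ∧ κ₀ < (Fintype.card V : ℤ) - 1))

variable {G}

omit [DecidableEq V] in
theorem backDegree_congr {β : Type*} [LinearOrder β] {p : V → α} {q : V → β}
    (h : ∀ x y, p x < p y ↔ q x < q y) : G.backDegree p = G.backDegree q := by
  funext u
  simp only [backDegree, h]

theorem degenList_iff {l : List V} (hl : l.Nodup) (hmem : ∀ v, v ∈ l) (κ : V → ℤ) :
    DegenList G κ l ↔ ∀ u, (G.backDegree l.idxOf u : ℤ) ≤ κ u := by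
  have hget : ∀ i : Fin l.length,
      (((l.take i).toFinset).filter (fun v => G.Adj (l.get i) v)).card
        = G.backDegree l.idxOf (l.get i) := by
    intro i
    rw [backDegree, List.get_eq_getElem, hl.idxOf_getElem]
    congr 1
    ext v
    simp [List.mem_take_iff_idxOf_lt (hmem v), and_comm]
  simp only [DegenList, hl, true_and, hget]
  exact ((List.get_surjective_iff.2 hmem).forall
    (p := fun u => (G.backDegree l.idxOf u : ℤ) ≤ κ u)).symm

theorem isDegen_univ_iff (κ : V → ℤ) :
    IsDegen G κ univ ↔ ∃ σ : V ≃ Fin (Fintype.card V), ∀ u, (G.backDegree σ u : ℤ) ≤ κ u := by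
  constructor
  · rintro ⟨l, hl, hdeg⟩
    have hmem : ∀ v, v ∈ l := fun v => List.mem_toFinset.1 (hl ▸ mem_univ v)
    obtain ⟨σ, hσ⟩ := exists_equiv_fin_lt_iff_s13 l.idxOf fun x y h => (List.idxOf_inj (hmem x)).1 h
    exact ⟨σ, by rwa [backDegree_congr hσ, ← degenList_iff hdeg.1 hmem]⟩
  · rintro ⟨σ, hσ⟩
    have hnd : (List.ofFn σ.symm).Nodup := List.nodup_ofFn.2 σ.symm.injective
    have hidx : ∀ v, (List.ofFn σ.symm).idxOf v = σ v := fun v => by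
      simpa using hnd.idxOf_getElem (σ v) (by simp)
    refine ⟨List.ofFn σ.symm, by ext v; simpa using ⟨σ v, by simp⟩, ?_⟩
    rw [degenList_iff hnd (fun v => by simpa using ⟨σ v, by simp⟩),
      backDegree_congr (q := σ) fun x y => by rw [hidx, hidx, Fin.lt_def]]
    exact hσ

theorem betaW_eq_inf' {c : V → ℝ} (hc : ∀ u, 0 ≤ c u) (κ : V → ℤ) :
    betaW G c κ = univ.inf' ⟨Fintype.equivFin V, mem_univ _⟩
      (fun σ : V ≃ Fin (Fintype.card V) => G.orderingCost c κ σ) := by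
  set S := {x : ℝ | ∃ ι : V → ℤ, (∀ u, 0 ≤ ι u) ∧
    IsDegen G (fun u => κ u + ι u) Finset.univ ∧ x = ∑ u : V, c u * (ι u : ℝ)}
  have hmem (σ : V ≃ Fin (Fintype.card V)) : G.orderingCost c κ σ ∈ S :=
    ⟨G.incentive κ σ, fun u => le_max_left _ _,
      (isDegen_univ_iff _).2 ⟨σ, fun u => by simp only [incentive]; omega⟩, rfl⟩
  have hbdd : BddBelow S := ⟨0, by
    rintro _ ⟨ι, hι, -, rfl⟩
    exact sum_nonneg fun u _ => mul_nonneg (hc u) (by exact_mod_cast hι u)⟩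
  refine le_antisymm (le_inf' _ _ fun σ _ => csInf_le hbdd (hmem σ)) ?_
  refine le_csInf ⟨_, hmem (Fintype.equivFin V)⟩ ?_
  rintro _ ⟨ι, hι, hdeg, rfl⟩
  obtain ⟨σ, hσ⟩ := (isDegen_univ_iff _).1 hdeg
  refine inf'_le_of_le _ (mem_univ σ) (sum_le_sum fun u _ => ?_)
  refine mul_le_mul_of_nonneg_left (Int.cast_le.2 (max_le (hι u) ?_)) (hc u)
  linarith [hσ u]

theorem sum_incentive {κ : V → ℤ} {u : V} (h0 : 0 ≤ κ u) (hd : κ u ≤ G.degree u) :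
    ∑ σ : V ≃ Fin (Fintype.card V), (G.incentive κ σ u : ℝ)
      = Fintype.card (V ≃ Fin (Fintype.card V))
        * (((G.degree u : ℝ) - κ u) * ((G.degree u : ℝ) - κ u + 1)
          / (2 * (G.degree u + 1))) := by
  obtain ⟨k, hk⟩ := Int.eq_ofNat_of_zero_le h0
  obtain ⟨m, hm⟩ := Nat.exists_eq_add_of_le (show k ≤ G.degree u by omega)
  have hsum := card_nsmul_sum_comp_card_filter_lt (α := Fin (Fintype.card V))
    (G.notMem_neighborFinset_self u) fun j => ((max 0 ((j : ℤ) - κ u) : ℤ) : ℝ)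
  have hgauss : (∑ j ∈ range (k + m + 1), ((max 0 ((j : ℤ) - k) : ℤ) : ℝ)) * 2
      = m * (m + 1) := by
    exact_mod_cast sum_range_max_sub_mul_two k m
  rw [card_neighborFinset_eq_degree, nsmul_eq_mul, nsmul_eq_mul, hm, hk] at hsum
  simp only [incentive, backDegree, hm, hk]
  push_cast at hsum hgauss ⊢
  field_simp
  linear_combination (2 : ℝ) * hsum + (Fintype.card (V ≃ Fin (Fintype.card V)) : ℝ) * hgauss

theorem sum_orderingCost (c : V → ℝ) {κ : V → ℤ} (hκ : ∀ u, 0 ≤ κ u ∧ κ u ≤ G.degree u) :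
    ∑ σ : V ≃ Fin (Fintype.card V), G.orderingCost c κ σ
      = Fintype.card (V ≃ Fin (Fintype.card V)) * ∑ u : V,
        c u * (((G.degree u : ℝ) - κ u) * ((G.degree u : ℝ) - κ u + 1))
          / (2 * (G.degree u + 1)) := by
  simp only [orderingCost]
  rw [sum_comm, mul_sum]
  refine sum_congr rfl fun u _ => ?_
  rw [← mul_sum, sum_incentive (hκ u).1 (hκ u).2]
  ring

omit [DecidableEq V] in
theorem backDegree_le_degree (p : V → α) (u : V) : G.backDegree p u ≤ G.degree u := by
  rw [← card_neighborFinset_eq_degree]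
  exact card_filter_le _ _

omit [DecidableEq V] in
theorem sum_backDegree {p : V → α} (hp : Function.Injective p) :
    ∑ u, G.backDegree p u = #G.edgeFinset := by
  have hsplit (u : V) :
      G.backDegree p u + #{v ∈ G.neighborFinset u | p u < p v} = G.degree u := by
    rw [backDegree, ← card_neighborFinset_eq_degree,
      ← card_filter_add_card_filter_not (s := G.neighborFinset u) (fun v => p v < p u)]
    congr 2
    refine filter_congr fun v hv => ?_
    have hne : p v ≠ p u := hp.ne (G.ne_of_adj ((mem_neighborFinset _ _ _).1 hv)).symm
    exact ⟨fun h => lt_asymm h, fun h => (not_lt.1 h).lt_of_ne hne.symm⟩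
  have hsymm : ∑ u, #{v ∈ G.neighborFinset u | p u < p v} = ∑ u, G.backDegree p u := by
    simp only [backDegree, neighborFinset_eq_filter, filter_filter, card_filter]
    rw [sum_comm]
    simp only [G.adj_comm]
  have := G.sum_degrees_eq_twice_card_edges
  simp only [← hsplit, sum_add_distrib, hsymm] at this
  omega

omit [DecidableEq V] in
theorem backDegree_of_forall_adj (h : ∀ u v, u ≠ v → G.Adj u v) (σ : V ≃ Fin (Fintype.card V))
    (u : V) : G.backDegree σ u = σ u := by
  rw [backDegree, ← Fin.card_Iio, ← filter_gt_eq_Iio]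
  refine card_equiv σ fun v => ?_
  simp only [mem_filter, mem_neighborFinset, mem_univ, true_and, and_iff_right_iff_imp]
  exact fun hv => h u v fun huv => (huv ▸ hv).false

omit [DecidableEq V] in
theorem IsIncentiveExtremal.hasConstantOrderingCost {c : V → ℝ} {κ : V → ℤ}
    (h : G.IsIncentiveExtremal c κ) : G.HasConstantOrderingCost c κ := by
  suffices ∃ x, ∀ σ : V ≃ Fin (Fintype.card V), G.orderingCost c κ σ = x by
    obtain ⟨x, hx⟩ := this
    exact fun σ τ => (hx σ).trans (hx τ).symm
  rcases h with hκ | ⟨⟨c₀, hc⟩, hκ⟩ | ⟨hadj, ⟨c₀, hc⟩, ⟨κ₀, hκ, -⟩⟩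
  · refine ⟨0, fun σ => sum_eq_zero fun u _ => ?_⟩
    have := G.backDegree_le_degree σ u
    simp only [incentive, hκ, Int.cast_zero, mul_zero,
      max_eq_left (show (G.backDegree σ u : ℤ) - G.degree u ≤ 0 by omega)]
  · refine ⟨c₀ * #G.edgeFinset, fun σ => ?_⟩
    simp only [orderingCost, incentive, hc, hκ, sub_zero, max_eq_right (Int.natCast_nonneg _),
      Int.cast_natCast, ← mul_sum, ← Nat.cast_sum, sum_backDegree σ.injective]
  · refine ⟨∑ i : Fin (Fintype.card V), c₀ * ((max 0 ((i : ℤ) - κ₀) : ℤ) : ℝ), fun σ => ?_⟩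
    rw [← Equiv.sum_comp σ]
    simp only [orderingCost, incentive, hc, hκ, backDegree_of_forall_adj hadj]

section ConsecutiveSwap

variable {σ : V ≃ α} {u v : V}

theorem backDegree_swap_of_ne (hσ : ∀ x, σ x < σ v ↔ σ x ≤ σ u) {w : V} (hwu : w ≠ u)
    (hwv : w ≠ v) : G.backDegree ((Equiv.swap u v).trans σ) w = G.backDegree σ w := by
  have hw : σ v < σ w ↔ σ u < σ w := by
    rw [lt_iff_le_and_ne, lt_iff_le_and_ne (a := σ u), ← not_lt, ← not_lt,
      lt_iff_lt_of_consecutive hσ hwu, σ.injective.ne_iff, σ.injective.ne_iff]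
    exact and_congr_right fun _ => iff_of_true (Ne.symm hwv) (Ne.symm hwu)
  simp only [backDegree, Equiv.coe_trans, Function.comp_apply,
    Equiv.swap_apply_of_ne_of_ne hwu hwv]
  congr 1
  refine filter_congr fun x _ => ?_
  rcases eq_or_ne x u with rfl | hxu
  · rw [Equiv.swap_apply_left, hw]
  rcases eq_or_ne x v with rfl | hxv
  · rw [Equiv.swap_apply_right, hw]
  · rw [Equiv.swap_apply_of_ne_of_ne hxu hxv]

theorem backDegree_swap_left (hσ : ∀ x, σ x < σ v ↔ σ x ≤ σ u) (huv : G.Adj u v) :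
    G.backDegree ((Equiv.swap u v).trans σ) u = G.backDegree σ u + 1 := by
  have hlt : ¬σ v < σ u := lt_asymm ((hσ u).2 le_rfl)
  rw [backDegree, backDegree, ← card_insert_of_notMem (a := v) (by simp [hlt])]
  congr 1
  ext x
  simp only [mem_filter, mem_insert, mem_neighborFinset, Equiv.coe_trans, Function.comp_apply,
    Equiv.swap_apply_left]
  rcases eq_or_ne x u with rfl | hxu
  · simp [huv.ne]
  rcases eq_or_ne x v with rfl | hxv
  · simp [huv, (hσ u).2 le_rfl]
  · rw [Equiv.swap_apply_of_ne_of_ne hxu hxv, lt_iff_lt_of_consecutive hσ hxu]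
    simp [hxv]

theorem backDegree_swap_right (hσ : ∀ x, σ x < σ v ↔ σ x ≤ σ u) (huv : G.Adj u v) :
    G.backDegree σ v = G.backDegree ((Equiv.swap u v).trans σ) v + 1 := by
  have hlt : ¬σ v < σ u := lt_asymm ((hσ u).2 le_rfl)
  rw [backDegree, backDegree, ← card_insert_of_notMem (a := u) (by simp [hlt])]
  congr 1
  ext x
  simp only [mem_filter, mem_insert, mem_neighborFinset, Equiv.coe_trans, Function.comp_apply,
    Equiv.swap_apply_right]
  rcases eq_or_ne x u with rfl | hxu
  · simp [huv.symm, (hσ x).2 le_rfl]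
  rcases eq_or_ne x v with rfl | hxv
  · simp [huv.ne.symm]
  · rw [Equiv.swap_apply_of_ne_of_ne hxu hxv, lt_iff_lt_of_consecutive hσ hxu]
    simp [hxu]

theorem orderingCost_swap_sub (hσ : ∀ x, σ x < σ v ↔ σ x ≤ σ u) (huv : G.Adj u v)
    (c : V → ℝ) (κ : V → ℤ) :
    G.orderingCost c κ ((Equiv.swap u v).trans σ) - G.orderingCost c κ σ
      = c u * (if κ u ≤ G.backDegree σ u then 1 else 0)
        - c v * (if κ v ≤ G.backDegree ((Equiv.swap u v).trans σ) v then 1 else 0) := by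
  have hstep (n k : ℤ) : (max 0 (n + 1 - k) : ℤ) = max 0 (n - k) + if k ≤ n then 1 else 0 := by
    split_ifs <;> omega
  simp only [orderingCost, ← sum_sub_distrib, ← mul_sub]
  rw [Fintype.sum_eq_add u v huv.ne fun w hw => by
    rw [incentive, incentive, backDegree_swap_of_ne hσ hw.1 hw.2, sub_self, mul_zero]]
  simp only [incentive, backDegree_swap_left hσ huv, backDegree_swap_right hσ huv, Nat.cast_add,
    Nat.cast_one, hstep]
  push_cast
  ring

end ConsecutiveSwap

variable {c : V → ℝ} {κ : V → ℤ}

theorem HasConstantOrderingCost.le_card_filter_adj_iff (H : G.HasConstantOrderingCost c κ)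
    (hc : ∀ u, 0 < c u) {A : Finset V} {u v : V} (huv : G.Adj u v) (hu : u ∉ A) (hv : v ∉ A) :
    (κ u ≤ #{x ∈ A | G.Adj u x} ↔ κ v ≤ #{x ∈ A | G.Adj v x}) ∧
      (κ u ≤ #{x ∈ A | G.Adj u x} → c u = c v) := by
  obtain ⟨σ, hσA, hσ⟩ := exists_equiv_fin_consecutive hu hv huv.ne
  have hswap (x : V) : Equiv.swap u v x ∈ A ↔ x ∈ A := by
    rcases eq_or_ne x u with rfl | hxu
    · simp [hu, hv]
    rcases eq_or_ne x v with rfl | hxv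
    · simp [hu, hv]
    · rw [Equiv.swap_apply_of_ne_of_ne hxu hxv]
  have hσu : G.backDegree σ u = #{x ∈ A | G.Adj u x} := by
    rw [backDegree]
    congr 1
    ext x
    simp [hσA, and_comm]
  have hτv : G.backDegree ((Equiv.swap u v).trans σ) v = #{x ∈ A | G.Adj v x} := by
    rw [backDegree]
    congr 1
    ext x
    simp [hσA, hswap, and_comm]
  have key := orderingCost_swap_sub hσ huv c κ
  rw [H ((Equiv.swap u v).trans σ) σ, sub_self, hσu, hτv, eq_comm, sub_eq_zero] at key
  split_ifs at key with h1 h2 h2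
  · simpa [h1, h2] using key
  · simp [(hc u).ne'] at key
  · exact absurd key.symm (by simpa using (hc v).ne')
  · simp [h1, h2]

theorem HasConstantOrderingCost.pos_iff_of_adj (H : G.HasConstantOrderingCost c κ)
    (hc : ∀ u, 0 < c u) {u v : V} (huv : G.Adj u v) : 0 < κ u ↔ 0 < κ v := by
  have h := (H.le_card_filter_adj_iff hc huv (notMem_empty u) (notMem_empty v)).1
  simp only [filter_empty, card_empty, Nat.cast_zero] at h
  simpa only [not_le] using not_congr h

theorem card_filter_adj_compl_pair {u v : V} (huv : G.Adj u v) :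
    (#{x ∈ univ \ {u, v} | G.Adj u x} : ℤ) = G.degree u - 1 := by
  have h : #{x ∈ univ \ {u, v} | G.Adj u x} + 1 = G.degree u := by
    rw [← card_neighborFinset_eq_degree, ← card_erase_add_one ((mem_neighborFinset _ _ _).2 huv)]
    congr 2
    ext x
    simp only [mem_filter, mem_sdiff, mem_univ, mem_insert, mem_singleton, true_and, mem_erase,
      mem_neighborFinset]
    exact ⟨fun h => ⟨fun hxv => h.1 (Or.inr hxv), h.2⟩,
      fun h => ⟨fun hx => hx.elim (fun hxu => G.irrefl (hxu ▸ h.2)) h.1, h.2⟩⟩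
  omega

theorem HasConstantOrderingCost.lt_degree_iff_of_adj (H : G.HasConstantOrderingCost c κ)
    (hc : ∀ u, 0 < c u) {u v : V} (huv : G.Adj u v) :
    (κ u < G.degree u ↔ κ v < G.degree v) ∧ (κ u < G.degree u → c u = c v) := by
  have h := H.le_card_filter_adj_iff hc huv (A := univ \ {u, v}) (by simp) (by simp)
  rwa [card_filter_adj_compl_pair huv, pair_comm, card_filter_adj_compl_pair huv.symm,
    Int.le_sub_one_iff, Int.le_sub_one_iff] at h

theorem HasConstantOrderingCost.le_card_filter_adj_of_subset
    (H : G.HasConstantOrderingCost c κ) (hc : ∀ u, 0 < c u) {u v : V} (huv : G.Adj u v)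
    {A : Finset V}
    (hA : A ⊆ (G.neighborFinset v).erase u) (hcard : #A = κ v) :
    κ u ≤ #{x ∈ A | G.Adj u x} := by
  have hu : u ∉ A := fun h => by simpa using hA h
  have hv : v ∉ A := fun h => by simpa using hA h
  refine (H.le_card_filter_adj_iff hc huv hu hv).1.2 ?_
  rw [filter_true_of_mem fun x hx => (mem_neighborFinset _ _ _).1 (mem_of_mem_erase (hA hx)),
    hcard]

theorem card_neighborFinset_erase {u v : V} (huv : G.Adj u v) :
    (#((G.neighborFinset v).erase u) : ℤ) = G.degree v - 1 := by
  rw [card_erase_of_mem ((mem_neighborFinset _ _ _).2 huv.symm), card_neighborFinset_eq_degree,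
    Nat.cast_sub (G.degree_pos_iff_exists_adj v |>.2 ⟨u, huv.symm⟩)]
  rfl

theorem HasConstantOrderingCost.le_of_adj (H : G.HasConstantOrderingCost c κ)
    (hc : ∀ u, 0 < c u) {u v : V} (huv : G.Adj u v) (h0 : 0 ≤ κ v) (hd : κ v < G.degree v) :
    κ u ≤ κ v := by
  obtain ⟨A, hA, hcard⟩ := exists_subset_card_eq (s := (G.neighborFinset v).erase u)
    (n := (κ v).toNat) (by have := card_neighborFinset_erase huv; omega)
  calc κ u ≤ #{x ∈ A | G.Adj u x} := H.le_card_filter_adj_of_subset hc huv hA (by omega)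
    _ ≤ #A := by exact_mod_cast card_filter_le _ _
    _ = κ v := by omega

theorem HasConstantOrderingCost.adj_of_adj (H : G.HasConstantOrderingCost c κ)
    (hc : ∀ u, 0 < c u) {u v x : V} (huv : G.Adj u v) (hvx : G.Adj v x) (hxu : x ≠ u)
    (h0 : 0 < κ v) (hd : κ v < G.degree v) (heq : κ u = κ v) : G.Adj u x := by
  have hx : x ∈ (G.neighborFinset v).erase u := by simp [hxu, hvx]
  obtain ⟨A, hxA, hA, hcard⟩ := exists_subsuperset_card_eq (singleton_subset_iff.2 hx)
    (n := (κ v).toNat) (by simp; omega) (by have := card_neighborFinset_erase huv; omega)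
  by_contra hux
  have hsub : {y ∈ A | G.Adj u y} ⊆ A.erase x := fun y hy => by
    simp only [mem_filter] at hy
    exact mem_erase.2 ⟨by rintro rfl; exact hux hy.2, hy.1⟩
  have := H.le_card_filter_adj_of_subset hc huv hA (by omega)
  have := card_le_card hsub
  rw [card_erase_of_mem (singleton_subset_iff.1 hxA)] at this
  omega

theorem HasConstantOrderingCost.isIncentiveExtremal (H : G.HasConstantOrderingCost c κ)
    (hG : G.Connected) (hc : ∀ u, 0 < c u) (hκ : ∀ u, 0 ≤ κ u ∧ κ u ≤ (G.degree u : ℤ)) :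
    G.IsIncentiveExtremal c κ := by
  by_cases hdeg : ∀ u, κ u = G.degree u
  · exact Or.inl hdeg
  obtain ⟨w, hw⟩ := not_forall.1 hdeg
  have hlt (u : V) : κ u < G.degree u :=
    (hG.preconnected.iff_of_forall_adj _ (fun x y h => (H.lt_degree_iff_of_adj hc h).1) u w).2
      ((hκ w).2.lt_of_ne hw)
  have hcw (u : V) : c u = c w := hG.preconnected.apply_eq_of_forall_adj c
    (fun x y h => (H.lt_degree_iff_of_adj hc h).2 (hlt x)) u w
  by_cases hzero : ∀ u, κ u = 0
  · exact Or.inr (Or.inl ⟨⟨c w, hcw⟩, hzero⟩)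
  obtain ⟨w', hw'⟩ := not_forall.1 hzero
  have hpos (u : V) : 0 < κ u :=
    (hG.preconnected.iff_of_forall_adj _ (fun x y h => H.pos_iff_of_adj hc h) u w').2
      ((hκ w').1.lt_of_ne (Ne.symm hw'))
  have hκw (u : V) : κ u = κ w := hG.preconnected.apply_eq_of_forall_adj κ (fun x y h =>
    le_antisymm (H.le_of_adj hc h (hκ y).1 (hlt y)) (H.le_of_adj hc h.symm (hκ x).1 (hlt x))) u w
  refine Or.inr (Or.inr ⟨fun u v huv => ?_, ⟨c w, hcw⟩, κ w, hκw, hpos w, ?_⟩)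
  · refine hG.preconnected.adj_of_ne (fun x y z hxy hyz hxz => ?_) huv
    exact H.adj_of_adj hc hxy hyz (Ne.symm hxz) (hpos y) (hlt y) ((hκw x).trans (hκw y).symm)
  · have := G.degree_lt_card_verts w
    have := hlt w
    omega

theorem hasConstantOrderingCost_iff (hG : G.Connected) (hc : ∀ u, 0 < c u)
    (hκ : ∀ u, 0 ≤ κ u ∧ κ u ≤ (G.degree u : ℤ)) :
    G.HasConstantOrderingCost c κ ↔ G.IsIncentiveExtremal c κ :=
  ⟨fun H => H.isIncentiveExtremal hG hc hκ, IsIncentiveExtremal.hasConstantOrderingCost⟩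

end SimpleGraph

/-- Theorem 3 of the paper: characterization of the extremal graphs for the
partial-incentives bound. -/
theorem extremal_characterization_beta (G : SimpleGraph V) [DecidableRel G.Adj]
    (hG : G.Connected)
    (c : V → ℝ) (hc : ∀ u, 0 < c u)
    (κ : V → ℤ) (hκ : ∀ u, 0 ≤ κ u ∧ κ u ≤ (G.degree u : ℤ)) :
    betaW G c κ = ∑ u : V,
        c u * (((G.degree u : ℝ) - κ u) * ((G.degree u : ℝ) - κ u + 1)) / (2 * (G.degree u + 1)) ↔
      ((∀ u : V, κ u = (G.degree u : ℤ)) ∨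
       ((∃ c₀ : ℝ, ∀ u : V, c u = c₀) ∧ (∀ u : V, κ u = 0)) ∨
       ((∀ u v : V, u ≠ v → G.Adj u v) ∧
        (∃ c₀ : ℝ, ∀ u : V, c u = c₀) ∧
        (∃ κ₀ : ℤ, (∀ u : V, κ u = κ₀) ∧ 0 < κ₀ ∧ κ₀ < (Fintype.card V : ℤ) - 1))) := by
  have hN : (Fintype.card (V ≃ Fin (Fintype.card V)) : ℝ) ≠ 0 :=
    Nat.cast_ne_zero.2 (Fintype.card_pos_iff.2 ⟨Fintype.equivFin V⟩).ne'
  rw [← mul_right_inj' hN, ← SimpleGraph.sum_orderingCost c hκ,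
    SimpleGraph.betaW_eq_inf' fun u => (hc u).le, ← card_univ, ← nsmul_eq_mul]
  refine (card_nsmul_inf'_eq_sum_iff _ _).trans ?_
  simp only [mem_univ, forall_const]
  exact SimpleGraph.hasConstantOrderingCost_iff hG hc hκ
end
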